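/- arXiv:2208.06189 — 7 statements merged into one kernel-verified Lean document; each statement's English description precedes it below -/
import Mathlib

section
/- For every finite simple connected vertex-transitive graph Γ of valence 3, the ratio η(Γ) = |V(Γ)| / max{ord(g) : g ∈ Aut(Γ)} satisfies η(Γ) ≥ 1; that is, no automorphism of Γ has order exceeding the number of vertices. -/
/-!
Let `ℓ v` be the length of the `⟨g⟩`-orbit of `v`. For an edge `vw`, `g ^ ℓ v` fixes `v`, hence
permutes `N(v)`, and the `⟨g ^ ℓ v⟩`-orbit of `w` has `ℓ w / gcd (ℓ v) (ℓ w) ≤ 3` points, with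
equality only if this orbit is all of `N(v)`. Then `g ^ ℓ w` fixes `N(v)` pointwise, so if `Γ` has
no twins (distinct vertices with the same neighbourhood) it fixes `v`, i.e. `ℓ v ∣ ℓ w`. Hence along
every edge one period is `1`, `2` or `3` times the other. The `p`-adic valuation of `ℓ` is then
constant for `p ≥ 5`, and the `3`-adic one is constant up to a correction at vertices having a
neighbour of triple period. Such a vertex, if it maximises the `2`-adic valuation, can be replaced
by that neighbour, so some vertex maximises every valuation at once: its period is a multiple of
all periods, hence of `ord g`, and it is at most `|V|`.

If `Γ` has twins, vertex-transitivity makes every vertex have a twin, which forces `Γ ≅ K₃,₃`;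
every permutation of `6` points has order at most `6`.
-/

open Function

namespace Function

variable {α : Type*} {f : α → α} {s : Set α} {x : α}

lemma ncard_image_iterate_Iio_minimalPeriod :
    ((f^[·] x) '' Set.Iio (minimalPeriod f x)).ncard = minimalPeriod f x := by
  rw [iterate_injOn_Iio_minimalPeriod.ncard_image, Set.ncard_Iio_nat]

lemma image_iterate_Iio_minimalPeriod_subset (hf : Set.MapsTo f s s) (hx : x ∈ s) :
    (f^[·] x) '' Set.Iio (minimalPeriod f x) ⊆ s := by
  rintro _ ⟨n, -, rfl⟩
  exact hf.iterate n hx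

lemma minimalPeriod_le_ncard_of_mapsTo (hs : s.Finite) (hf : Set.MapsTo f s s) (hx : x ∈ s) :
    minimalPeriod f x ≤ s.ncard := by
  rw [← ncard_image_iterate_Iio_minimalPeriod]
  exact Set.ncard_le_ncard (image_iterate_Iio_minimalPeriod_subset hf hx) hs

lemma exists_iterate_eq_of_minimalPeriod_eq_ncard (hs : s.Finite) (hf : Set.MapsTo f s s)
    (hx : x ∈ s) (h : minimalPeriod f x = s.ncard) {y : α} (hy : y ∈ s) :
    ∃ n, f^[n] x = y := by
  have hsub := image_iterate_Iio_minimalPeriod_subset hf hx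
  rw [← Set.eq_of_subset_of_ncard_le hsub (by rw [ncard_image_iterate_Iio_minimalPeriod, h]) hs]
    at hy
  obtain ⟨n, -, rfl⟩ := hy
  exact ⟨n, rfl⟩

end Function

lemma Nat.exists_eq_mul_of_div_gcd_le_three {a b : ℕ} (ha : 0 < a) (hb : 0 < b)
    (hab : b / b.gcd a ≤ 3) (hba : a / a.gcd b ≤ 3)
    (hab3 : b / b.gcd a = 3 → a ∣ b) (hba3 : a / a.gcd b = 3 → b ∣ a) :
    ∃ r ∈ Finset.Icc 1 3, b = r * a ∨ a = r * b := by
  obtain ⟨d, p, q, hd, hpq, rfl, rfl⟩ := Nat.exists_coprime' (Nat.gcd_pos_of_pos_left b ha)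
  rw [Nat.gcd_mul_right, hpq.symm.gcd_eq_one, one_mul, Nat.mul_div_cancel _ hd] at hab hab3
  rw [Nat.gcd_mul_right, hpq.gcd_eq_one, one_mul, Nat.mul_div_cancel _ hd] at hba hba3
  simp only [Nat.mul_dvd_mul_iff_right hd] at hab3 hba3
  have hp : 0 < p := Nat.pos_of_mul_pos_right ha
  have hq : 0 < q := Nat.pos_of_mul_pos_right hb
  have : p = 1 ∨ q = 1 := by
    interval_cases p <;> interval_cases q <;> simp_all [Nat.coprime_self]
  rcases this with rfl | rfl
  · exact ⟨q, Finset.mem_Icc.2 ⟨hq, hab⟩, Or.inl (by ring)⟩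
  · exact ⟨p, Finset.mem_Icc.2 ⟨hp, hba⟩, Or.inr (by ring)⟩

lemma Multiset.lcm_le_six {s : Multiset ℕ} (h2 : ∀ a ∈ s, 2 ≤ a) (hs : s.sum ≤ 6) :
    s.lcm ≤ 6 := by
  have hcard : Multiset.card s * 2 ≤ 6 := (Multiset.card_nsmul_le_sum h2).trans hs
  induction s using Quotient.inductionOn with | h l => ?_
  simp only [Multiset.quot_mk_to_coe, Multiset.mem_coe, Multiset.sum_coe, Multiset.coe_card] at *
  rcases l with _ | ⟨a, _ | ⟨b, _ | ⟨c, _ | ⟨d, l⟩⟩⟩⟩ <;>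
    simp_all [← Multiset.cons_coe, Multiset.lcm_cons]
  · obtain ⟨ha, hb⟩ := h2
    have : a ≤ 4 := by omega
    have : b ≤ 4 := by omega
    interval_cases a <;> interval_cases b <;> first | omega | decide
  · obtain ⟨rfl, rfl, rfl⟩ : a = 2 ∧ b = 2 ∧ c = 2 := by omega
    decide
  · omega

namespace Equiv.Perm

variable {α : Type*}

lemma orderOf_dvd_of_forall_minimalPeriod_dvd {σ : Perm α} {n : ℕ}
    (h : ∀ x, minimalPeriod σ x ∣ n) : orderOf σ ∣ n :=
  orderOf_dvd_of_pow_eq_one <| Equiv.ext fun x => by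
    rw [← iterate_eq_pow]
    exact isPeriodicPt_iff_minimalPeriod_dvd.2 (h x)

lemma orderOf_le_six [Fintype α] (h : Fintype.card α ≤ 6) (σ : Perm α) : orderOf σ ≤ 6 := by
  classical
  rw [← σ.lcm_cycleType]
  exact Multiset.lcm_le_six (fun _ => two_le_of_mem_cycleType)
    (σ.sum_cycleType ▸ (Finset.card_le_univ _).trans h)

end Equiv.Perm

namespace SimpleGraph

variable {V : Type*} {Γ : SimpleGraph V}

lemma Preconnected.eq_univ_of_adj_closed (hΓ : Γ.Preconnected) {s : Set V} (hne : s.Nonempty)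
    (hs : ∀ ⦃v w⦄, Γ.Adj v w → v ∈ s → w ∈ s) : s = Set.univ := by
  obtain ⟨v, hv⟩ := hne
  refine Set.eq_univ_of_forall fun w => ?_
  obtain ⟨p⟩ := hΓ v w
  induction p with
  | nil => exact hv
  | cons h _ ih => exact ih (hs h hv)

lemma Preconnected.apply_eq_of_adj {α : Type*} (hΓ : Γ.Preconnected) {f : V → α}
    (hf : ∀ ⦃v w⦄, Γ.Adj v w → f v = f w) (v w : V) : f v = f w := by
  have hs := hΓ.eq_univ_of_adj_closed (s := {z | f z = f v}) ⟨v, rfl⟩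
    fun x y hxy hx => (hf hxy).symm.trans hx
  exact (Set.eq_univ_iff_forall.1 hs w).symm

namespace Iso

variable (φ : Γ ≃g Γ) {v w : V}

lemma coe_pow (n : ℕ) : ⇑(φ ^ n) = (⇑φ)^[n] := by
  induction n with
  | zero => rfl
  | succ n ih => rw [pow_succ', RelIso.coe_mul, ih, iterate_succ']

lemma neighborSet_apply_of_forall_apply_eq (h : ∀ x ∈ Γ.neighborSet v, φ x = x) :
    Γ.neighborSet (φ v) = Γ.neighborSet v := by
  rw [← φ.image_neighborSet, Set.image_congr h, Set.image_id']

lemma mapsTo_iterate_minimalPeriod_neighborSet (v : V) :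
    Set.MapsTo (⇑φ)^[minimalPeriod φ v] (Γ.neighborSet v) (Γ.neighborSet v) := by
  have h := (φ ^ minimalPeriod φ v).image_neighborSet (v := v)
  rw [coe_pow, iterate_minimalPeriod] at h
  exact Set.mapsTo_iff_image_subset.2 h.le

variable [Finite V]

lemma minimalPeriod_pos (v : V) : 0 < minimalPeriod φ v :=
  minimalPeriod_pos_of_mem_periodicPts (φ.injective.mem_periodicPts v)

lemma minimalPeriod_apply_iterate (v : V) (n : ℕ) :
    minimalPeriod φ ((⇑φ)^[n] v) = minimalPeriod φ v :=
  Function.minimalPeriod_apply_iterate (φ.injective.mem_periodicPts v) n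

lemma minimalPeriod_div_gcd_le_ncard (h : Γ.Adj v w) :
    minimalPeriod φ w / (minimalPeriod φ w).gcd (minimalPeriod φ v) ≤
      (Γ.neighborSet v).ncard := by
  rw [← minimalPeriod_iterate_eq_div_gcd (φ.minimalPeriod_pos v).ne']
  exact minimalPeriod_le_ncard_of_mapsTo (Set.toFinite _)
    (φ.mapsTo_iterate_minimalPeriod_neighborSet v) h

lemma minimalPeriod_eq_of_div_gcd_eq_ncard (h : Γ.Adj v w)
    (heq : minimalPeriod φ w / (minimalPeriod φ w).gcd (minimalPeriod φ v) =
      (Γ.neighborSet v).ncard) {x : V} (hx : Γ.Adj v x) :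
    minimalPeriod φ x = minimalPeriod φ w := by
  rw [← minimalPeriod_iterate_eq_div_gcd (φ.minimalPeriod_pos v).ne'] at heq
  obtain ⟨n, rfl⟩ := exists_iterate_eq_of_minimalPeriod_eq_ncard (Set.toFinite _)
    (φ.mapsTo_iterate_minimalPeriod_neighborSet v) h heq hx
  rw [← iterate_mul, minimalPeriod_apply_iterate]

lemma minimalPeriod_dvd_of_div_gcd_eq_ncard (hinj : Injective Γ.neighborSet) (h : Γ.Adj v w)
    (heq : minimalPeriod φ w / (minimalPeriod φ w).gcd (minimalPeriod φ v) =
      (Γ.neighborSet v).ncard) :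
    minimalPeriod φ v ∣ minimalPeriod φ w := by
  have hfix : ∀ x ∈ Γ.neighborSet v, (φ ^ minimalPeriod φ w) x = x := fun x hx => by
    rw [coe_pow, ← φ.minimalPeriod_eq_of_div_gcd_eq_ncard h heq hx]
    exact iterate_minimalPeriod
  have hv := hinj ((φ ^ minimalPeriod φ w).neighborSet_apply_of_forall_apply_eq hfix)
  rw [coe_pow] at hv
  exact IsPeriodicPt.minimalPeriod_dvd hv

lemma exists_minimalPeriod_eq_mul (hcubic : ∀ v, (Γ.neighborSet v).ncard = 3)
    (hinj : Injective Γ.neighborSet) (h : Γ.Adj v w) :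
    ∃ r ∈ Finset.Icc 1 3, minimalPeriod φ w = r * minimalPeriod φ v ∨
      minimalPeriod φ v = r * minimalPeriod φ w := by
  have hvw := φ.minimalPeriod_div_gcd_le_ncard h
  have hwv := φ.minimalPeriod_div_gcd_le_ncard h.symm
  rw [hcubic] at hvw hwv
  exact Nat.exists_eq_mul_of_div_gcd_le_three (φ.minimalPeriod_pos v) (φ.minimalPeriod_pos w)
    hvw hwv
    (fun h3 => φ.minimalPeriod_dvd_of_div_gcd_eq_ncard hinj h (h3.trans (hcubic v).symm))
    (fun h3 => φ.minimalPeriod_dvd_of_div_gcd_eq_ncard hinj h.symm (h3.trans (hcubic w).symm))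

lemma factorization_minimalPeriod_eq_of_adj (hcubic : ∀ v, (Γ.neighborSet v).ncard = 3)
    (hinj : Injective Γ.neighborSet) {p : ℕ} (hp2 : p ≠ 2) (hp3 : p ≠ 3) (h : Γ.Adj v w) :
    (minimalPeriod φ v).factorization p = (minimalPeriod φ w).factorization p := by
  have hmul : ∀ r ∈ Finset.Icc 1 3, ∀ n ≠ 0, (r * n).factorization p = n.factorization p := by
    intro r hr n hn
    obtain ⟨hr1, hr3⟩ := Finset.mem_Icc.1 hr
    rw [Nat.factorization_mul (by omega) hn, Finsupp.add_apply, add_eq_right]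
    interval_cases r <;>
      simp [Nat.prime_two.factorization, Nat.prime_three.factorization, hp2.symm, hp3.symm]
  obtain ⟨r, hr, hw | hv⟩ := φ.exists_minimalPeriod_eq_mul hcubic hinj h
  · rw [hw, hmul r hr _ (φ.minimalPeriod_pos v).ne']
  · rw [hv, hmul r hr _ (φ.minimalPeriod_pos w).ne']

def HasTriplePeriodNeighbor (v : V) : Prop :=
  ∃ w, Γ.Adj v w ∧ minimalPeriod φ w = 3 * minimalPeriod φ v

lemma minimalPeriod_eq_three_mul_of_hasTriplePeriodNeighbor
    (hcubic : ∀ v, (Γ.neighborSet v).ncard = 3) (hv : φ.HasTriplePeriodNeighbor v) {x : V}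
    (hx : Γ.Adj v x) : minimalPeriod φ x = 3 * minimalPeriod φ v := by
  obtain ⟨w, hw, h3⟩ := hv
  refine (φ.minimalPeriod_eq_of_div_gcd_eq_ncard hw ?_ hx).trans h3
  rw [h3, hcubic, Nat.gcd_mul_left_left, Nat.mul_div_cancel _ (φ.minimalPeriod_pos v)]

lemma not_hasTriplePeriodNeighbor_of_adj (hcubic : ∀ v, (Γ.neighborSet v).ncard = 3)
    (h : Γ.Adj v w) (hne : minimalPeriod φ w ≠ 3 * minimalPeriod φ v) :
    ¬ φ.HasTriplePeriodNeighbor v :=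
  fun hv => hne (φ.minimalPeriod_eq_three_mul_of_hasTriplePeriodNeighbor hcubic hv h)

open Classical in
/-- The 3-adic valuation of the period, corrected so as to become constant along edges
(`threePotential_eq_of_adj`). -/
noncomputable def threePotential (v : V) : ℕ :=
  (minimalPeriod φ v).factorization 3 + if φ.HasTriplePeriodNeighbor v then 1 else 0

lemma threePotential_eq_of_adj_of_eq_mul (hcubic : ∀ v, (Γ.neighborSet v).ncard = 3)
    (h : Γ.Adj v w) {r : ℕ} (hr : r ∈ Finset.Icc 1 3)
    (hw : minimalPeriod φ w = r * minimalPeriod φ v) :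
    φ.threePotential v = φ.threePotential w := by
  have hv := φ.minimalPeriod_pos v
  obtain ⟨hr1, hr3⟩ := Finset.mem_Icc.1 hr
  have hw3 : ¬ φ.HasTriplePeriodNeighbor w :=
    φ.not_hasTriplePeriodNeighbor_of_adj hcubic h.symm (by rw [hw]; interval_cases r <;> omega)
  unfold threePotential
  rw [if_neg hw3, hw, Nat.factorization_mul (by omega) hv.ne', Finsupp.add_apply]
  interval_cases r
  · rw [if_neg (φ.not_hasTriplePeriodNeighbor_of_adj hcubic h (by omega))]
    simp
  · rw [if_neg (φ.not_hasTriplePeriodNeighbor_of_adj hcubic h (by omega))]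
    simp [Nat.prime_two.factorization]
  · rw [if_pos ⟨w, h, hw⟩]
    simp [Nat.prime_three.factorization, add_comm]

lemma threePotential_eq_of_adj (hcubic : ∀ v, (Γ.neighborSet v).ncard = 3)
    (hinj : Injective Γ.neighborSet) (h : Γ.Adj v w) :
    φ.threePotential v = φ.threePotential w := by
  obtain ⟨r, hr, hw | hv⟩ := φ.exists_minimalPeriod_eq_mul hcubic hinj h
  · exact φ.threePotential_eq_of_adj_of_eq_mul hcubic h hr hw
  · exact (φ.threePotential_eq_of_adj_of_eq_mul hcubic h.symm hr hv).symm

lemma exists_forall_factorization_two_le_not_hasTriplePeriodNeighbor [Nonempty V]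
    (hcubic : ∀ v, (Γ.neighborSet v).ncard = 3) :
    ∃ x, (∀ z, (minimalPeriod φ z).factorization 2 ≤ (minimalPeriod φ x).factorization 2) ∧
      ¬ φ.HasTriplePeriodNeighbor x := by
  obtain ⟨u, hu⟩ := Finite.exists_max fun z => (minimalPeriod φ z).factorization 2
  by_cases hu3 : φ.HasTriplePeriodNeighbor u
  · obtain ⟨w, huw, hw⟩ := hu3
    have hu0 := φ.minimalPeriod_pos u
    refine ⟨w, fun z => ?_, φ.not_hasTriplePeriodNeighbor_of_adj hcubic huw.symm (by omega)⟩
    rw [hw, Nat.factorization_mul three_ne_zero hu0.ne']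
    simpa [Nat.prime_three.factorization] using hu z
  · exact ⟨u, hu, hu3⟩

theorem exists_forall_minimalPeriod_dvd (hconn : Γ.Connected)
    (hcubic : ∀ v, (Γ.neighborSet v).ncard = 3) (hinj : Injective Γ.neighborSet) :
    ∃ x, ∀ z, minimalPeriod φ z ∣ minimalPeriod φ x := by
  have := hconn.nonempty
  obtain ⟨x, hx2, hx3⟩ :=
    φ.exists_forall_factorization_two_le_not_hasTriplePeriodNeighbor hcubic
  refine ⟨x, fun z => (Nat.factorization_le_iff_dvd (φ.minimalPeriod_pos z).ne'
    (φ.minimalPeriod_pos x).ne').1 (Finsupp.le_def.2 fun p => ?_)⟩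
  by_cases hp2 : p = 2
  · exact hp2 ▸ hx2 z
  by_cases hp3 : p = 3
  · subst hp3
    calc (minimalPeriod φ z).factorization 3
        ≤ φ.threePotential z := Nat.le_add_right _ _
      _ = φ.threePotential x := hconn.preconnected.apply_eq_of_adj
          (fun _ _ h => φ.threePotential_eq_of_adj hcubic hinj h) z x
      _ = (minimalPeriod φ x).factorization 3 := by simp [threePotential, hx3]
  · exact (hconn.preconnected.apply_eq_of_adj
      (fun _ _ h => φ.factorization_minimalPeriod_eq_of_adj hcubic hinj hp2 hp3 h) z x).le

end Iso

lemma exists_ne_neighborSet_eq (hvt : ∀ u v : V, ∃ φ : Γ ≃g Γ, φ u = v)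
    (htwin : ¬ Injective Γ.neighborSet) (v : V) :
    ∃ v', v' ≠ v ∧ Γ.neighborSet v' = Γ.neighborSet v := by
  obtain ⟨u, u', hN, hne⟩ := not_injective_iff.1 htwin
  obtain ⟨φ, rfl⟩ := hvt u v
  exact ⟨φ u', φ.injective.ne hne.symm, by rw [← φ.image_neighborSet, ← φ.image_neighborSet, hN]⟩

lemma neighborSet_eq_of_adj_of_adj [Finite V] (hcubic : ∀ v, (Γ.neighborSet v).ncard = 3)
    (htwin : ∀ v, ∃ v', v' ≠ v ∧ Γ.neighborSet v' = Γ.neighborSet v) {v x y : V}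
    (hx : Γ.Adj v x) (hy : Γ.Adj v y) : Γ.neighborSet x = Γ.neighborSet y := by
  by_contra hxy
  obtain ⟨x', hx', hNx⟩ := htwin x
  obtain ⟨y', hy', hNy⟩ := htwin y
  have hvx' : Γ.Adj v x' := (hNx ▸ hx.symm : v ∈ Γ.neighborSet x').symm
  have hvy' : Γ.Adj v y' := (hNy ▸ hy.symm : v ∈ Γ.neighborSet y').symm
  have hdisj : Disjoint ({x, x'} : Set V) {y, y'} := by
    refine Set.disjoint_left.2 ?_
    rintro z (rfl | rfl) (rfl | h) <;> simp_all
  have hsub : {x, x'} ∪ {y, y'} ⊆ Γ.neighborSet v := by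
    rintro z ((rfl | rfl) | (rfl | rfl)) <;> assumption
  have := Set.ncard_le_ncard hsub (Set.toFinite _)
  rw [Set.ncard_union_eq hdisj, Set.ncard_pair hx'.symm, Set.ncard_pair hy'.symm, hcubic] at this
  omega

theorem card_eq_six_of_not_injective_neighborSet [Finite V] (hconn : Γ.Connected)
    (hcubic : ∀ v, (Γ.neighborSet v).ncard = 3) (hvt : ∀ u v : V, ∃ φ : Γ ≃g Γ, φ u = v)
    (htwin : ¬ Injective Γ.neighborSet) : Nat.card V = 6 := by
  have htw := exists_ne_neighborSet_eq hvt htwin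
  obtain ⟨v⟩ := hconn.nonempty
  obtain ⟨u, hu⟩ : (Γ.neighborSet v).Nonempty :=
    Set.nonempty_of_ncard_ne_zero (by rw [hcubic]; omega)
  have hNv : ∀ x, Γ.Adj v x → Γ.neighborSet x = Γ.neighborSet u :=
    fun x hx => neighborSet_eq_of_adj_of_adj hcubic htw hx hu
  have hNu : ∀ y, Γ.Adj u y → Γ.neighborSet y = Γ.neighborSet v :=
    fun y hy => neighborSet_eq_of_adj_of_adj hcubic htw hy hu.symm
  have huniv : Γ.neighborSet v ∪ Γ.neighborSet u = Set.univ := by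
    refine hconn.preconnected.eq_univ_of_adj_closed ⟨u, Or.inl hu⟩ ?_
    rintro x y hxy (hx | hx)
    · exact Or.inr (hNv x hx ▸ hxy)
    · exact Or.inl (hNu x hx ▸ hxy)
  have hdisj : Disjoint (Γ.neighborSet v) (Γ.neighborSet u) :=
    Set.disjoint_left.2 fun x hxv hxu => Γ.irrefl ((hNv x hxv).symm ▸ hxu)
  rw [← Set.ncard_univ, ← huniv, Set.ncard_union_eq hdisj, hcubic, hcubic]

end SimpleGraph

/-- For every finite simple connected vertex-transitive cubic graph Γ,
no automorphism of Γ has order exceeding the number of vertices (η(Γ) ≥ 1). -/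
theorem stmt_0 {V : Type*} [Fintype V] (Γ : SimpleGraph V)
    (hconn : Γ.Connected)
    (hcubic : ∀ v : V, (Γ.neighborSet v).ncard = 3)
    (hvt : ∀ u v : V, ∃ g : Equiv.Perm V,
      (∀ a b : V, Γ.Adj (g a) (g b) ↔ Γ.Adj a b) ∧ g u = v)
    (g : Equiv.Perm V) (hg : ∀ a b : V, Γ.Adj (g a) (g b) ↔ Γ.Adj a b) :
    orderOf g ≤ Fintype.card V := by
  by_cases hinj : Injective Γ.neighborSet
  · let φ : Γ ≃g Γ := ⟨g, hg _ _⟩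
    obtain ⟨x, hx⟩ := φ.exists_forall_minimalPeriod_dvd hconn hcubic hinj
    calc orderOf g ≤ minimalPeriod g x :=
          Nat.le_of_dvd (φ.minimalPeriod_pos x) (g.orderOf_dvd_of_forall_minimalPeriod_dvd hx)
      _ ≤ Fintype.card V := minimalPeriod_le_card
  · have hvt' : ∀ u v : V, ∃ φ : Γ ≃g Γ, φ u = v := fun u v =>
      let ⟨h, hh, huv⟩ := hvt u v
      ⟨⟨h, hh _ _⟩, huv⟩
    have h6 := Nat.card_eq_fintype_card (α := V) ▸
      SimpleGraph.card_eq_six_of_not_injective_neighborSet hconn hcubic hvt' hinj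
    exact h6 ▸ g.orderOf_le_six h6.le
end

section
/- Every connected cubic Cayley graph on a cyclic group ℤ_{2m} (m ≥ 2) is isomorphic either to the Möbius ladder Moeb(2m) = Cay(ℤ_{2m}; {1,−1,m}) or to the prism Prism(m) = Cay(ℤ_{2m}; {2,−2,m}); in the latter case m is odd. -/
/-- The Möbius ladder: vertex set ℤ_n, x adjacent to x±1 and x + n/2. -/
def Moeb (n : ℕ) : SimpleGraph (ZMod n) :=
  SimpleGraph.fromRel (fun x y => y = x + 1 ∨ y = x + (n / 2 : ℕ))

/-- The prism: vertex set ℤ_m × Bool, with (x,i) ~ (x±1,i) and (x,false) ~ (x,true). -/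
def Prism (m : ℕ) : SimpleGraph (ZMod m × Bool) :=
  SimpleGraph.fromRel (fun p q => (p.2 = q.2 ∧ q.1 = p.1 + 1) ∨ (p.1 = q.1 ∧ p.2 ≠ q.2))

/-- The Cayley graph of ℤ_n with connection set {r, -r, t}. -/
def CayC (n : ℕ) (r t : ZMod n) : SimpleGraph (ZMod n) :=
  SimpleGraph.fromRel (fun x y => y = x + r ∨ y = x + t)

/-- Multiplication by a unit, as an equivalence. -/
def mulUnitEquiv {M : Type*} [Monoid M] (u : Mˣ) : M ≃ M where
  toFun x := (u : M) * x
  invFun x := ((u⁻¹ : Mˣ) : M) * x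
  left_inv x := by simp [← mul_assoc]
  right_inv x := by simp [← mul_assoc]

/-- The two-element group as booleans. -/
def boolEquiv : ZMod 2 ≃ Bool :=
  ⟨fun x => decide (x = 1), fun b => cond b 1 0, by decide, by decide⟩

lemma boolEquiv_add_one (z : ZMod 2) : boolEquiv (z + 1) = !(boolEquiv z) := by
  revert z; decide

set_option maxHeartbeats 1000000 in
/-- Every connected cubic Cayley graph on ℤ_{2m} (m ≥ 2), with
connection set {r, −r, m} (r ≠ 0, r ≠ m, r ≠ −r, generating ℤ_{2m}), is
isomorphic to the Möbius ladder Moeb(2m) or to the prism Prism(m); in the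
latter case m is odd. -/
theorem stmt_5 (m : ℕ) (hm : 2 ≤ m) (r : ZMod (2 * m))
    (hr0 : r ≠ 0) (hrm : r ≠ (m : ZMod (2 * m))) (hr2 : r + r ≠ 0)
    (hgen : AddSubgroup.closure ({r, (m : ZMod (2 * m))} : Set (ZMod (2 * m))) = ⊤) :
    Nonempty (CayC (2 * m) r (m : ZMod (2 * m)) ≃g Moeb (2 * m)) ∨
      (Odd m ∧ Nonempty (CayC (2 * m) r (m : ZMod (2 * m)) ≃g Prism m)) := by
  haveI : NeZero (2 * m) := ⟨by omega⟩
  haveI : NeZero m := ⟨by omega⟩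
  have hrv : ((r.val : ℕ) : ZMod (2 * m)) = r := ZMod.natCast_zmod_val r
  -- extract a ℤ-linear combination from the generation hypothesis
  have h1 : (1 : ZMod (2 * m)) ∈
      AddSubgroup.closure ({r, (m : ZMod (2 * m))} : Set (ZMod (2 * m))) := by
    rw [hgen]; exact AddSubgroup.mem_top 1
  rw [AddSubgroup.mem_closure_pair] at h1
  obtain ⟨a, b, hab⟩ := h1
  rw [zsmul_eq_mul, zsmul_eq_mul] at hab
  have hz : ((a * (r.val : ℤ) + b * (m : ℤ) - 1 : ℤ) : ZMod (2 * m)) = 0 := by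
    push_cast
    rw [hrv, hab]
    ring
  rw [ZMod.intCast_zmod_eq_zero_iff_dvd] at hz
  obtain ⟨c, hc⟩ := hz
  -- coprimality of r.val with m
  have hvm : Nat.Coprime r.val m := by
    have hic : IsCoprime (r.val : ℤ) (m : ℤ) :=
      ⟨a, b - 2 * c, by push_cast at hc ⊢; linear_combination hc⟩
    exact Nat.isCoprime_iff_coprime.mp hic
  rcases Nat.even_or_odd r.val with hv | hv
  · -- r even : prism case, m odd
    right
    have hmodd : Odd m := by
      obtain ⟨k, hk⟩ := hv
      have hk' : (r.val : ℤ) = k + k := by exact_mod_cast hk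
      rw [hk'] at hc
      have hbm : Odd (b * (m : ℤ)) :=
        ⟨(m : ℤ) * c - a * k, by push_cast at hc ⊢; linear_combination hc⟩
      rw [Int.odd_mul] at hbm
      exact_mod_cast hbm.2
    refine ⟨hmodd, ?_⟩
    have cop2m : Nat.Coprime 2 m := Nat.coprime_two_left.mpr hmodd
    have crt := ZMod.chineseRemainder cop2m
    have hsu : IsUnit ((r.val : ZMod m)) := (ZMod.isUnit_iff_coprime r.val m).mpr hvm
    obtain ⟨u, hu⟩ := hsu
    set φ : ZMod (2 * m) ≃ ZMod m × Bool :=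
      crt.toEquiv.trans ((Equiv.prodComm (ZMod 2) (ZMod m)).trans
        (Equiv.prodCongr (mulUnitEquiv u⁻¹) boolEquiv)) with hφ
    have hφdef : ∀ x : ZMod (2 * m),
        φ x = (((u⁻¹ : (ZMod m)ˣ) : ZMod m) * (crt x).2, boolEquiv (crt x).1) := by
      intro x; rfl
    have hcrtnat : ∀ k : ℕ, crt ((k : ℕ) : ZMod (2 * m)) = ((k : ZMod 2), (k : ZMod m)) := by
      intro k
      have h := map_natCast (crt : ZMod (2 * m) →+* ZMod 2 × ZMod m) k
      rw [show ((crt : ZMod (2 * m) →+* ZMod 2 × ZMod m) ((k : ℕ) : ZMod (2*m)))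
            = crt ((k : ℕ) : ZMod (2*m)) from rfl] at h
      rw [h, Prod.ext_iff]
      constructor <;> simp
    have hcrtr : crt r = (0, ((r.val : ℕ) : ZMod m)) := by
      have h := hcrtnat r.val
      rw [hrv] at h
      rw [h]
      have h2 : ((r.val : ℕ) : ZMod 2) = 0 := by
        rw [ZMod.natCast_eq_zero_iff]; exact hv.two_dvd
      rw [h2]
    have hcrtm : crt ((m : ℕ) : ZMod (2 * m)) = (1, 0) := by
      rw [hcrtnat]
      have h2 : ((m : ℕ) : ZMod 2) = 1 := by
        obtain ⟨k, hk⟩ := hmodd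
        rw [hk]; push_cast
        rw [show (2 : ZMod 2) = 0 from rfl]
        ring
      rw [h2, ZMod.natCast_self]
    have hφr : ∀ x, φ (x + r) = ((φ x).1 + 1, (φ x).2) := by
      intro x
      have key : ((u⁻¹ : (ZMod m)ˣ) : ZMod m) * ((crt x).2 + ((r.val : ℕ) : ZMod m))
          = ((u⁻¹ : (ZMod m)ˣ) : ZMod m) * (crt x).2 + 1 := by
        rw [mul_add, ← hu, Units.inv_mul]
      rw [hφdef, hφdef, map_add, hcrtr, Prod.fst_add, Prod.snd_add]
      rw [show ((0 : ZMod 2), ((r.val : ℕ) : ZMod m)).1 = 0 from rfl,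
        show ((0 : ZMod 2), ((r.val : ℕ) : ZMod m)).2 = ((r.val : ℕ) : ZMod m) from rfl,
        add_zero, key]
    have hφm : ∀ x, φ (x + (m : ZMod (2 * m))) = ((φ x).1, !(φ x).2) := by
      intro x
      rw [hφdef, hφdef, map_add, hcrtm, Prod.fst_add, Prod.snd_add]
      rw [show ((1 : ZMod 2), (0 : ZMod m)).1 = 1 from rfl,
        show ((1 : ZMod 2), (0 : ZMod m)).2 = 0 from rfl,
        add_zero, boolEquiv_add_one]
    have H1 : ∀ x y : ZMod (2 * m),
        ((φ x).2 = (φ y).2 ∧ (φ y).1 = (φ x).1 + 1) ↔ y = x + r := by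
      intro x y
      constructor
      · rintro ⟨h1, h2⟩
        apply φ.injective
        rw [hφr, Prod.ext_iff]
        exact ⟨h2, h1.symm⟩
      · rintro rfl
        rw [hφr]
        exact ⟨rfl, rfl⟩
    have H2 : ∀ x y : ZMod (2 * m),
        ((φ x).1 = (φ y).1 ∧ (φ x).2 ≠ (φ y).2) ↔ y = x + (m : ZMod (2 * m)) := by
      intro x y
      constructor
      · rintro ⟨h1, h2⟩
        apply φ.injective
        rw [hφm, Prod.ext_iff]
        refine ⟨h1.symm, ?_⟩
        revert h2; cases (φ x).2 <;> cases (φ y).2 <;> simp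
      · rintro rfl
        rw [hφm]
        exact ⟨rfl, by cases (φ x).2 <;> simp⟩
    refine ⟨⟨φ, ?_⟩⟩
    intro x y
    show (Prism m).Adj (φ x) (φ y) ↔ (CayC (2 * m) r (m : ZMod (2 * m))).Adj x y
    simp only [Prism, CayC, SimpleGraph.fromRel_adj]
    have hne : φ x ≠ φ y ↔ x ≠ y := φ.injective.ne_iff
    have A1 := H1 x y
    have A2 := H1 y x
    have A3 := H2 x y
    have A4 := H2 y x
    exact and_congr hne (or_congr (or_congr A1 A3) (or_congr A2 A4))
  · -- r odd : Möbius case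
    left
    have hcop : Nat.Coprime r.val (2 * m) :=
      Nat.Coprime.mul_right (Nat.coprime_two_right.mpr hv) hvm
    have hru : IsUnit r := by
      rw [← hrv]; exact (ZMod.isUnit_iff_coprime r.val (2 * m)).mpr hcop
    obtain ⟨u, hu⟩ := hru
    set w : ZMod (2 * m) := ((u⁻¹ : (ZMod (2 * m))ˣ) : ZMod (2 * m)) with hw
    have hwr : w * r = 1 := by rw [hw, ← hu, Units.inv_mul]
    -- w is odd
    have hwodd : Odd w.val := by
      haveI : Fact (1 < 2 * m) := ⟨by omega⟩
      have hmul : (w * r).val = 1 := by rw [hwr, ZMod.val_one]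
      rw [ZMod.val_mul] at hmul
      have h2m : w.val * r.val ≡ 1 [MOD 2 * m] := by
        unfold Nat.ModEq
        rw [hmul, Nat.mod_eq_of_lt (by omega)]
      have h2 : w.val * r.val ≡ 1 [MOD 2] := h2m.of_dvd ⟨m, rfl⟩
      have hodd : Odd (w.val * r.val) := by
        rw [Nat.odd_iff]
        simpa [Nat.ModEq] using h2
      exact (Nat.odd_mul.mp hodd).1
    have hwm : w * (m : ZMod (2 * m)) = (m : ZMod (2 * m)) := by
      obtain ⟨k, hk⟩ := hwodd
      have hw' : w = ((2 * k + 1 : ℕ) : ZMod (2 * m)) := by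
        rw [← hk, ZMod.natCast_zmod_val]
      have h0 : ((2 * m : ℕ) : ZMod (2 * m)) = 0 := ZMod.natCast_self _
      rw [hw']
      push_cast at h0 ⊢
      linear_combination (k : ZMod (2 * m)) * h0
    have hdiv : (((2 * m) / 2 : ℕ) : ZMod (2 * m)) = (m : ZMod (2 * m)) := by
      congr 1; omega
    have G1 : ∀ x y : ZMod (2 * m), w * y = w * x + 1 ↔ y = x + r := by
      intro x y
      rw [show w * x + 1 = w * (x + r) by rw [mul_add, hwr]]
      exact Units.mul_right_inj u⁻¹
    have G2 : ∀ x y : ZMod (2 * m),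
        w * y = w * x + (((2 * m) / 2 : ℕ) : ZMod (2 * m)) ↔ y = x + (m : ZMod (2 * m)) := by
      intro x y
      rw [hdiv,
        show w * x + (m : ZMod (2 * m)) = w * (x + (m : ZMod (2 * m))) by rw [mul_add, hwm]]
      exact Units.mul_right_inj u⁻¹
    refine ⟨⟨mulUnitEquiv u⁻¹, ?_⟩⟩
    intro x y
    show (Moeb (2 * m)).Adj (w * x) (w * y) ↔ (CayC (2 * m) r (m : ZMod (2 * m))).Adj x y
    simp only [Moeb, CayC, SimpleGraph.fromRel_adj]
    have hne : w * x ≠ w * y ↔ x ≠ y := not_congr (Units.mul_right_inj u⁻¹)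
    have A1 := G1 x y
    have A2 := G1 y x
    have A3 := G2 x y
    have A4 := G2 y x
    exact and_congr hne (or_congr (or_congr A1 A3) (or_congr A2 A4))
end

section
/- For m ≥ 5 and a ∈ ℤ_m with gcd(m,a) = 1 and m odd, the map sending u_i ↦ v_{i+a} and v_i ↦ u_{i+a} is an automorphism of the cyclic Haar graph H(m, a, −a) that acts regularly on the vertices; hence H(m,a,−a) is a circulant. -/
/-- The cyclic Haar graph H(m,x,y): vertex set ℤ_m × Bool, with u_i = (i, false)
adjacent to v_{i+s} = (i+s, true) for s ∈ {0, x, y}. -/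
def Haar (m : ℕ) (x y : ZMod m) : SimpleGraph (ZMod m × Bool) :=
  SimpleGraph.fromRel (fun p q =>
    p.2 = false ∧ q.2 = true ∧ (q.1 = p.1 ∨ q.1 = p.1 + x ∨ q.1 = p.1 + y))

/-- The permutation u_i ↦ v_{i+a}, v_i ↦ u_{i+a} of ℤ_m × Bool. -/
def haarShift (m : ℕ) (a : ZMod m) : Equiv.Perm (ZMod m × Bool) where
  toFun p := (p.1 + a, !p.2)
  invFun p := (p.1 - a, !p.2)
  left_inv p := by simp
  right_inv p := by simp

lemma haarShift_pow_apply (m : ℕ) (a : ZMod m) (k : ℕ) (p : ZMod m × Bool) :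
    ((haarShift m a) ^ k) p = (p.1 + (k : ZMod m) * a, xor (Nat.bodd k) p.2) := by
  induction k with
  | zero => simp
  | succ n ih =>
    rw [pow_succ', Equiv.Perm.mul_apply, ih]
    simp only [haarShift, Equiv.coe_fn_mk, Nat.bodd_succ]
    refine Prod.ext ?_ ?_
    · show p.1 + (n:ZMod m) * a + a = _; push_cast; ring
    · cases Nat.bodd n <;> cases p.2 <;> simp

lemma haarShift_trans (m : ℕ) [NeZero m] (hodd : Odd m) (a : ZMod m) (ha : IsUnit a)
    (p q : ZMod m × Bool) : ∃ k : ℕ, ((haarShift m a) ^ k) p = q := by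
  obtain ⟨u, hu⟩ := ha
  have hbm : Nat.bodd m = true := by
    have := Nat.mod_two_of_bodd m
    rw [Nat.odd_iff.mp hodd] at this
    cases h : Nat.bodd m <;> rw [h] at this <;> simp_all
  set d : ZMod m := (q.1 - p.1) * ((u⁻¹ : Units (ZMod m)) : ZMod m) with hd
  have key : (d.val : ZMod m) * a = q.1 - p.1 := by
    rw [ZMod.natCast_zmod_val, hd, ← hu]
    rw [mul_assoc]
    simp
  by_cases hpar : xor (Nat.bodd d.val) p.2 = q.2
  · refine ⟨d.val, ?_⟩
    rw [haarShift_pow_apply]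
    refine Prod.ext ?_ hpar
    show p.1 + (d.val : ZMod m) * a = q.1
    rw [key]; ring
  · refine ⟨d.val + m, ?_⟩
    rw [haarShift_pow_apply]
    refine Prod.ext ?_ ?_
    · show p.1 + ((d.val + m : ℕ) : ZMod m) * a = q.1
      push_cast
      rw [ZMod.natCast_self]
      rw [show ((d.val : ZMod m) + 0) * a = (d.val : ZMod m) * a by ring, key]; ring
    · show (Nat.bodd (d.val + m) ^^ p.2) = q.2
      simp only [Nat.bodd_add, hbm]
      cases hb : Nat.bodd d.val <;> cases hp : p.2 <;> cases hq : q.2 <;>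
        simp_all

lemma haarShift_order (m : ℕ) [NeZero m] (hodd : Odd m) (a : ZMod m) (ha : IsUnit a) :
    orderOf (haarShift m a) = 2 * m := by
  have h2m : (haarShift m a) ^ (2 * m) = 1 := by
    refine Equiv.ext fun p => ?_
    rw [haarShift_pow_apply]
    have : ((2 * m : ℕ) : ZMod m) = 0 := by push_cast [ZMod.natCast_self]; ring
    simp [this, Nat.bodd_mul]
  have hd1 : orderOf (haarShift m a) ∣ 2 * m := orderOf_dvd_of_pow_eq_one h2m
  set k := orderOf (haarShift m a) with hk
  have h1 : (haarShift m a) ^ k = 1 := pow_orderOf_eq_one _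
  have h2 : (haarShift m a ^ k) ((0 : ZMod m), false) = ((0 : ZMod m), false) := by
    rw [h1]; rfl
  rw [haarShift_pow_apply] at h2
  simp only [zero_add, Prod.mk.injEq] at h2
  obtain ⟨h3, h4⟩ := h2
  have hma : ((k : ZMod m)) = 0 := by
    obtain ⟨u, hu⟩ := ha
    have : (k : ZMod m) * a * ((u⁻¹ : Units (ZMod m)) : ZMod m)
        = 0 * ((u⁻¹ : Units (ZMod m)) : ZMod m) := by rw [h3]
    rwa [mul_assoc, ← hu, Units.mul_inv, mul_one, zero_mul] at this
  have hmdvd : m ∣ k := (ZMod.natCast_eq_zero_iff k m).mp hma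
  have h2dvd : 2 ∣ k := by
    have := Nat.mod_two_of_bodd k
    have hb : Nat.bodd k = false := by cases hbb : Nat.bodd k <;> simp_all
    rw [hb] at this
    exact Nat.dvd_of_mod_eq_zero this
  have hcop : Nat.Coprime 2 m := Nat.coprime_two_left.mpr hodd
  exact Nat.dvd_antisymm hd1 (hcop.mul_dvd_of_dvd_of_dvd h2dvd hmdvd)

lemma tri {m : ℕ} (a i j : ZMod m) :
    (i = j ∨ i = j + a ∨ i = j + -a) ↔ (j = i ∨ j = i + a ∨ j = i + -a) := by
  constructor <;> rintro (h | h | h) <;> subst h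
  · exact Or.inl rfl
  · exact Or.inr (Or.inr (by ring))
  · exact Or.inr (Or.inl (by ring))
  · exact Or.inl rfl
  · exact Or.inr (Or.inr (by ring))
  · exact Or.inr (Or.inl (by ring))

/-- For m ≥ 5 odd and a ∈ ℤ_m a unit (gcd(m,a)=1), the map
u_i ↦ v_{i+a}, v_i ↦ u_{i+a} is an automorphism of H(m,a,−a) acting regularly
on the vertices; hence H(m,a,−a) is a circulant. -/
theorem stmt_6 (m : ℕ) (hm : 5 ≤ m) (hodd : Odd m) (a : ZMod m) (ha : IsUnit a) :
    (∀ p q : ZMod m × Bool,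
        (Haar m a (-a)).Adj (haarShift m a p) (haarShift m a q) ↔ (Haar m a (-a)).Adj p q) ∧
    (∀ p q : ZMod m × Bool,
        q ∈ MulAction.orbit (Subgroup.zpowers (haarShift m a)) p) ∧
    (∀ p : ZMod m × Bool,
        Nat.card (MulAction.orbit (Subgroup.zpowers (haarShift m a)) p)
          = orderOf (haarShift m a)) := by
  haveI : NeZero m := ⟨by omega⟩
  have htrans : ∀ p q : ZMod m × Bool,
      q ∈ MulAction.orbit (Subgroup.zpowers (haarShift m a)) p := by
    intro p q
    obtain ⟨k, hk⟩ := haarShift_trans m hodd a ha p q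
    exact ⟨⟨(haarShift m a) ^ k, Subgroup.npow_mem_zpowers _ k⟩, hk⟩
  refine ⟨?_, htrans, ?_⟩
  · intro p q
    obtain ⟨i, b⟩ := p
    obtain ⟨j, c⟩ := q
    simp only [Haar, SimpleGraph.fromRel_adj, haarShift, Equiv.coe_fn_mk, Prod.mk.injEq,
      ne_eq]
    cases b <;> cases c <;> simp_all
    all_goals
      exact ⟨fun h => h.elim (fun h => Or.inl h.symm)
          (fun h => h.elim (fun h => Or.inr (Or.inr (by rw [h]; ring)))
            (fun h => Or.inr (Or.inl h.symm))),
        fun h => h.elim (fun h => Or.inl h.symm)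
          (fun h => h.elim (fun h => Or.inr (Or.inr h.symm))
            (fun h => Or.inr (Or.inl (by rw [h]; ring))))⟩
  · intro p
    have horb : MulAction.orbit (Subgroup.zpowers (haarShift m a)) p = Set.univ :=
      Set.eq_univ_of_forall (fun q => htrans p q)
    rw [horb, haarShift_order m hodd a ha]
    rw [Nat.card_coe_set_eq, Set.ncard_univ, Nat.card_prod, Nat.card_zmod]
    simp [Nat.card_eq_fintype_card]
    ring
end

section
/- For m ≥ 5 odd and a ∈ ℤ_m with gcd(m,a) = 1, the map sending u_i ↦ v_i and v_i ↦ u_{i−2a} is an automorphism of the cyclic Haar graph H(m, a, 2a) acting regularly on the vertices; hence H(m, a, 2a) is a circulant. -/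
/-- The permutation u_i ↦ v_i, v_i ↦ u_{i−2a} of ℤ_m × Bool
(u_i = (i,false), v_i = (i,true)). -/
def haarShift2 (m : ℕ) (a : ZMod m) : Equiv.Perm (ZMod m × Bool) where
  toFun p := if p.2 then (p.1 - 2 * a, false) else (p.1, true)
  invFun p := if p.2 then (p.1, false) else (p.1 + 2 * a, true)
  left_inv p := by rcases p with ⟨i, _ | _⟩ <;> simp
  right_inv p := by rcases p with ⟨i, _ | _⟩ <;> simp

lemma haarShift2_false (m : ℕ) (a : ZMod m) (i : ZMod m) :
    haarShift2 m a (i, false) = (i, true) := rfl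

lemma haarShift2_true (m : ℕ) (a : ZMod m) (i : ZMod m) :
    haarShift2 m a (i, true) = (i - 2 * a, false) := rfl

lemma haarShift2_apply (m : ℕ) (a : ZMod m) (p : ZMod m × Bool) :
    haarShift2 m a p = if p.2 then (p.1 - 2 * a, false) else (p.1, true) := rfl

lemma haarShift2_snd (m : ℕ) (a : ZMod m) (p : ZMod m × Bool) :
    (haarShift2 m a p).2 = !p.2 := by
  rcases p with ⟨i, _ | _⟩ <;> rfl

lemma haarShift2_sq (m : ℕ) (a : ZMod m) (p : ZMod m × Bool) :
    (haarShift2 m a ^ 2) p = (p.1 - 2 * a, p.2) := by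
  rcases p with ⟨i, _ | _⟩ <;>
    simp [pow_succ, Equiv.Perm.mul_apply, haarShift2_apply]

lemma haarShift2_pow_even (m : ℕ) (a : ZMod m) (k : ℕ) (p : ZMod m × Bool) :
    (haarShift2 m a ^ (2 * k)) p = (p.1 - 2 * k * a, p.2) := by
  induction k generalizing p with
  | zero => simp
  | succ n ih =>
    have h : 2 * (n + 1) = 2 * n + 2 := by ring
    rw [h, pow_add, Equiv.Perm.mul_apply, haarShift2_sq, ih]
    push_cast
    exact Prod.ext (by ring) rfl

lemma haarShift2_pow_even' (m : ℕ) (a : ZMod m) (k : ℕ) (i : ZMod m) (c : Bool) :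
    (haarShift2 m a ^ (2 * k)) (i, c) = (i - 2 * k * a, c) :=
  haarShift2_pow_even m a k (i, c)

lemma haar_tri (m : ℕ) (a x y : ZMod m) :
    x = y - 2 * a ∨ x = y - 2 * a + a ∨ x = y ↔
      y = x ∨ y = x + a ∨ y = x + 2 * a := by
  constructor
  · rintro (h | h | h)
    · exact .inr (.inr (by rw [h]; ring))
    · exact .inr (.inl (by rw [h]; ring))
    · exact .inl h.symm
  · rintro (h | h | h)
    · exact .inr (.inr h.symm)
    · exact .inr (.inl (by rw [h]; ring))
    · exact .inl (by rw [h]; ring)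

lemma haar_reach (m : ℕ) [NeZero m] (a b : ZMod m) (hb : 2 * a * b = 1)
    (p q : ZMod m × Bool) : ∃ n : ℕ, (haarShift2 m a ^ n) p = q := by
  have cast_val : ∀ x : ZMod m, ((x.val : ℕ) : ZMod m) = x := fun x => by
    simp [ZMod.natCast_val, ZMod.cast_id]
  rcases p with ⟨i, bp⟩; rcases q with ⟨j, bq⟩
  have solve : ∀ t : ZMod m, i - 2 * ((b * (i - t)).val : ℕ) * a = t := fun t => by
    rw [cast_val]
    have h : 2 * (b * (i - t)) * a = (2 * a * b) * (i - t) := by ring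
    rw [h, hb, one_mul]; ring
  cases bp <;> cases bq
  · exact ⟨2 * (b * (i - j)).val, by
      rw [haarShift2_pow_even']; exact Prod.ext (solve j) rfl⟩
  · refine ⟨2 * (b * (i - j)).val + 1, ?_⟩
    rw [pow_succ, Equiv.Perm.mul_apply, haarShift2_false, haarShift2_pow_even']
    exact Prod.ext (solve j) rfl
  · refine ⟨2 * (b * (i - (j + 2 * a))).val + 1, ?_⟩
    rw [pow_succ, Equiv.Perm.mul_apply, haarShift2_true, haarShift2_pow_even']
    exact Prod.ext (by linear_combination solve (j + 2 * a)) rfl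
  · exact ⟨2 * (b * (i - j)).val, by
      rw [haarShift2_pow_even']; exact Prod.ext (solve j) rfl⟩

lemma haar_pow_eq_self (m : ℕ) [NeZero m] (a b : ZMod m) (hb : 2 * a * b = 1)
    (n : ℕ) (p : ZMod m × Bool) (h : (haarShift2 m a ^ n) p = p) : 2 * m ∣ n := by
  rcases Nat.even_or_odd n with ⟨k, hk⟩ | ⟨k, hk⟩
  · rw [hk, ← two_mul, haarShift2_pow_even] at h
    have h1 : p.1 - 2 * (k : ZMod m) * a = p.1 := congrArg Prod.fst h
    have h2 : 2 * (k : ZMod m) * a = 0 := by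
      have h5 := sub_eq_self.mp h1; linear_combination h5
    have h3 : (k : ZMod m) = 0 := by
      have h6 : (k : ZMod m) * (2 * a * b) = 0 := by linear_combination b * h2
      rwa [hb, mul_one] at h6
    have h4 : m ∣ k := (ZMod.natCast_eq_zero_iff k m).mp h3
    rw [hk, ← two_mul]
    exact mul_dvd_mul_left 2 h4
  · exfalso
    rw [hk, pow_succ, Equiv.Perm.mul_apply] at h
    have h7 := congrArg Prod.snd h
    rw [haarShift2_pow_even] at h7
    simp [haarShift2_snd] at h7

lemma haar_pow_order (m : ℕ) [NeZero m] (a : ZMod m) :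
    haarShift2 m a ^ (2 * m) = 1 := by
  ext p
  · rw [show ((haarShift2 m a ^ (2 * m)) p) = (p.1 - 2 * (m : ZMod m) * a, p.2) from
      haarShift2_pow_even m a m p]
    simp
  · rw [show ((haarShift2 m a ^ (2 * m)) p) = (p.1 - 2 * (m : ZMod m) * a, p.2) from
      haarShift2_pow_even m a m p]
    simp

/-- For m ≥ 5 odd and a ∈ ℤ_m a unit (gcd(m,a)=1), the map
u_i ↦ v_i, v_i ↦ u_{i−2a} is an automorphism of H(m,a,2a) acting regularly on
the vertices; hence H(m,a,2a) is a circulant. -/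
theorem stmt_7 (m : ℕ) (hm : 5 ≤ m) (hodd : Odd m) (a : ZMod m) (ha : IsUnit a) :
    (∀ p q : ZMod m × Bool,
        (Haar m a (2 * a)).Adj (haarShift2 m a p) (haarShift2 m a q)
          ↔ (Haar m a (2 * a)).Adj p q) ∧
    (∀ p q : ZMod m × Bool,
        q ∈ MulAction.orbit (Subgroup.zpowers (haarShift2 m a)) p) ∧
    (∀ p : ZMod m × Bool,
        Nat.card (MulAction.orbit (Subgroup.zpowers (haarShift2 m a)) p)
          = orderOf (haarShift2 m a)) := by
  haveI : NeZero m := ⟨by omega⟩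
  have h2 : IsUnit (2 : ZMod m) := by
    have hc : Nat.Coprime 2 m := Nat.coprime_two_left.mpr hodd
    have := (ZMod.isUnit_iff_coprime 2 m).mpr hc
    simpa using this
  have hu : IsUnit (2 * a) := h2.mul ha
  obtain ⟨b, hb⟩ := hu.exists_right_inv
  have reach := haar_reach m a b hb
  have key := haar_pow_eq_self m a b hb
  have horder : orderOf (haarShift2 m a) = 2 * m := by
    refine Nat.dvd_antisymm (orderOf_dvd_of_pow_eq_one (haar_pow_order m a)) ?_
    refine key (orderOf (haarShift2 m a)) ((0 : ZMod m), false) ?_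
    rw [pow_orderOf_eq_one]; rfl
  refine ⟨?_, ?_, ?_⟩
  · rintro ⟨i, bp⟩ ⟨j, bq⟩
    cases bp <;> cases bq <;>
      simp [Haar, haarShift2_apply, SimpleGraph.fromRel_adj] <;>
      exact haar_tri m a _ _
  · intro p q
    obtain ⟨n, hn⟩ := reach p q
    exact MulAction.mem_orbit_iff.mpr
      ⟨⟨haarShift2 m a ^ n, Subgroup.npow_mem_zpowers _ n⟩, hn⟩
  · intro p
    have hcard := Nat.card_congr (MulAction.orbitZPowersEquiv (haarShift2 m a) p)
    rw [Nat.card_zmod] at hcard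
    rw [hcard, horder]
    refine Nat.dvd_antisymm ?_ ?_
    · apply Function.IsPeriodicPt.minimalPeriod_dvd
      show ((haarShift2 m a • ·))^[2 * m] p = p
      rw [smul_iterate, haar_pow_order]
      simp
    · apply key
      have := Function.isPeriodicPt_minimalPeriod ((haarShift2 m a) • ·) p
      rw [Function.IsPeriodicPt, Function.IsFixedPt, smul_iterate] at this
      exact this
end

section
/- For even m ≥ 4 and a ∈ ℤ_m with gcd(m,a) = 1, the cyclic Haar graph H(m, a, −a) is isomorphic to the prism Prism(m). -/
section aux
variable {m : ℕ}

/-- parity of an element of `ZMod m` when `m` is even -/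
def od (h2 : 2 ∣ m) (k : ZMod m) : Bool := decide (ZMod.castHom h2 (ZMod 2) k = 1)

lemma od_add_one (h2 : 2 ∣ m) (k : ZMod m) : od h2 (k + 1) = !(od h2 k) := by
  unfold od
  rw [map_add, map_one]
  generalize (ZMod.castHom h2 (ZMod 2)) k = x
  revert x; decide

lemma haar_neg_adj (x i j : ZMod m) (b c : Bool) :
    (Haar m x (-x)).Adj (i, b) (j, c) ↔
      b ≠ c ∧ (j = i ∨ j = i + x ∨ j = i + (-x)) := by
  simp only [Haar, SimpleGraph.fromRel_adj]
  constructor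
  · rintro ⟨hne, ⟨hb, hc, h⟩ | ⟨hc, hb, h⟩⟩
    · exact ⟨by simp [hb, hc], h⟩
    · refine ⟨by simp [hb, hc], ?_⟩
      rcases h with h | h | h
      · exact Or.inl h.symm
      · exact Or.inr (Or.inr (by rw [h]; ring))
      · exact Or.inr (Or.inl (by rw [h]; ring))
  · rintro ⟨hbc, h⟩
    refine ⟨by simp [Prod.ext_iff, hbc], ?_⟩
    cases b
    · cases c
      · simp at hbc
      · exact Or.inl ⟨rfl, rfl, h⟩
    · cases c
      · refine Or.inr ⟨rfl, rfl, ?_⟩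
        rcases h with h | h | h
        · exact Or.inl h.symm
        · exact Or.inr (Or.inr (by rw [h]; ring))
        · exact Or.inr (Or.inl (by rw [h]; ring))
      · simp at hbc

lemma prism_adj (hm1 : 1 < m) (x y : ZMod m) (d e : Bool) :
    (Prism m).Adj (x, d) (y, e) ↔
      (d = e ∧ (y = x + 1 ∨ x = y + 1)) ∨ (x = y ∧ d ≠ e) := by
  haveI : Fact (1 < m) := ⟨hm1⟩
  have h10 : (1 : ZMod m) ≠ 0 := one_ne_zero
  simp only [Prism, SimpleGraph.fromRel_adj]
  constructor
  · rintro ⟨hne, (⟨hd, hx⟩ | ⟨hx, hd⟩) | (⟨hd, hx⟩ | ⟨hx, hd⟩)⟩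
    · exact Or.inl ⟨hd, Or.inl hx⟩
    · exact Or.inr ⟨hx, hd⟩
    · exact Or.inl ⟨hd.symm, Or.inr hx⟩
    · exact Or.inr ⟨hx.symm, fun h => hd h.symm⟩
  · rintro (⟨hd, hx | hx⟩ | ⟨hx, hd⟩)
    · refine ⟨?_, Or.inl (Or.inl ⟨hd, hx⟩)⟩
      simp only [ne_eq, Prod.ext_iff, not_and]
      intro hxy _; rw [hx, left_eq_add] at hxy; exact h10 hxy
    · refine ⟨?_, Or.inr (Or.inl ⟨hd.symm, hx⟩)⟩
      simp only [ne_eq, Prod.ext_iff, not_and]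
      intro hxy _
      rw [hxy, left_eq_add] at hx; exact h10 hx
    · exact ⟨by simp [Prod.ext_iff, hx, hd], Or.inl (Or.inr ⟨hx, hd⟩)⟩
end aux

/-- For even m ≥ 4 and a ∈ ℤ_m a unit (gcd(m,a)=1), the cyclic Haar
graph H(m,a,−a) is isomorphic to the prism Prism(m). -/
theorem stmt_8 (m : ℕ) (hm : 4 ≤ m) (heven : Even m) (a : ZMod m) (ha : IsUnit a) :
    Nonempty (Haar m a (-a) ≃g Prism m) := by
  obtain ⟨u, rfl⟩ := ha
  have hm1 : 1 < m := by omega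
  have h2 : (2 : ℕ) ∣ m := heven.two_dvd
  have bx1 : ∀ t b c : Bool, ((t.xor b) = ((!t).xor c)) ↔ b ≠ c := by decide
  have bx2 : ∀ t b c : Bool, ((t.xor b) ≠ (t.xor c)) ↔ b ≠ c := by decide
  have hsub : ∀ k l : ZMod m, l = k + (-1) ↔ k = l + 1 := by
    intro k l
    constructor <;> intro h <;> rw [h] <;> ring
  -- first iso: divide first coordinate by the unit u
  let e1 : Haar m (↑u) (-↑u) ≃g Haar m 1 (-1) :=
    { toFun := fun p => (p.1 * ↑u⁻¹, p.2)
      invFun := fun p => (p.1 * ↑u, p.2)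
      left_inv := fun p => by simp [mul_assoc]
      right_inv := fun p => by simp [mul_assoc]
      map_rel_iff' := by
        rintro ⟨i, b⟩ ⟨j, c⟩
        simp only [Equiv.coe_fn_mk]
        rw [haar_neg_adj, haar_neg_adj]
        refine and_congr_right fun _ => ?_
        have k1 : j * ↑u⁻¹ = i * ↑u⁻¹ ↔ j = i := by
          constructor
          · intro h
            have := congrArg (· * (↑u : ZMod m)) h
            simpa [mul_assoc] using this
          · intro h; rw [h]
        have k2 : j * ↑u⁻¹ = i * ↑u⁻¹ + 1 ↔ j = i + ↑u := by
          rw [Units.mul_inv_eq_iff_eq_mul, add_mul, one_mul, mul_assoc,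
            Units.inv_mul, mul_one]
        have k3 : j * ↑u⁻¹ = i * ↑u⁻¹ + (-1) ↔ j = i + (-↑u) := by
          rw [Units.mul_inv_eq_iff_eq_mul, add_mul, mul_assoc,
            Units.inv_mul, mul_one, neg_mul, one_mul]
        rw [k1, k2, k3] }
  -- second iso: twist the Bool coordinate by the parity of the first coordinate
  let e2 : Haar m 1 (-1) ≃g Prism m :=
    { toFun := fun p => (p.1, (od h2 p.1).xor p.2)
      invFun := fun p => (p.1, (od h2 p.1).xor p.2)
      left_inv := fun p => by simp [← Bool.xor_assoc]
      right_inv := fun p => by simp [← Bool.xor_assoc]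
      map_rel_iff' := by
        rintro ⟨k, b⟩ ⟨l, c⟩
        simp only [Equiv.coe_fn_mk]
        rw [prism_adj hm1, haar_neg_adj]
        constructor
        · rintro (⟨hxor, hl | hl⟩ | ⟨hkl, hxor⟩)
          · subst hl
            rw [od_add_one] at hxor
            exact ⟨(bx1 _ _ _).mp hxor, Or.inr (Or.inl rfl)⟩
          · subst hl
            rw [od_add_one] at hxor
            refine ⟨fun h => (bx1 _ _ _).mp hxor.symm h.symm, Or.inr (Or.inr ?_)⟩
            ring
          · subst hkl
            exact ⟨(bx2 _ _ _).mp hxor, Or.inl rfl⟩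
        · rintro ⟨hbc, hl | hl | hl⟩
          · subst hl
            exact Or.inr ⟨rfl, (bx2 _ _ _).mpr hbc⟩
          · subst hl
            refine Or.inl ⟨?_, Or.inl rfl⟩
            rw [od_add_one]
            exact (bx1 _ _ _).mpr hbc
          · have hk : k = l + 1 := (hsub k l).mp hl
            refine Or.inl ⟨?_, Or.inr hk⟩
            rw [hk, od_add_one]
            exact ((bx1 _ _ _).mpr fun h => hbc h.symm).symm }
  exact ⟨e1.trans e2⟩
end

section
/- A connected cubic cyclic Haar graph H(m, x, y) with m ≥ 5 is a circulant if and only if m is odd and {x,y} = {a, 2a} or {x,y} = {a, −a} for some a ∈ ℤ_m with gcd(m, a) = 1. -/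
open Equiv Function MulAction Subgroup

theorem apply_zpow_smul_eq {G α β : Type*} [Group G] [MulAction G α] {g : G} {f : α → β}
    (h : ∀ a, f (g • a) = f a) (n : ℤ) (a : α) : f (g ^ n • a) = f a := by
  induction n using Int.induction_on generalizing a with
  | zero => rw [zpow_zero, one_smul]
  | succ k ih => rw [zpow_add_one, mul_smul, ih, h]
  | pred k ih => rw [zpow_sub_one, mul_smul, ih, ← h (g⁻¹ • a), smul_inv_smul]

namespace SimpleGraph

variable {V : Type*} {G : SimpleGraph V}

theorem Reachable.eq_of_forall_adj {β : Type*} {f : V → β} (h : ∀ u v, G.Adj u v → f u = f v)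
    {u v : V} (huv : G.Reachable u v) : f u = f v := by
  rw [reachable_iff_reflTransGen] at huv
  induction huv with
  | refl => rfl
  | tail _ hadj ih => exact ih.trans (h _ _ hadj)

theorem adj_zpow_apply_iff {σ : Perm V} (hσ : ∀ p q, G.Adj (σ p) (σ q) ↔ G.Adj p q) (n : ℤ)
    (p q : V) : G.Adj ((σ ^ n) p) ((σ ^ n) q) ↔ G.Adj p q :=
  Iff.of_eq (apply_zpow_smul_eq (g := σ) (f := fun z : V × V => G.Adj z.1 z.2)
    (fun z => propext (hσ z.1 z.2)) n (p, q))

theorem Preconnected.forall_eq_or_forall_eq_not (hG : G.Preconnected) {c : V → Bool}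
    (hc : ∀ u v, G.Adj u v → c u ≠ c v) {σ : Perm V}
    (hσ : ∀ p q, G.Adj (σ p) (σ q) ↔ G.Adj p q) :
    (∀ v, c (σ v) = c v) ∨ (∀ v, c (σ v) = !c v) := by
  have hconst : ∀ u v, G.Adj u v → xor (c (σ u)) (c u) = xor (c (σ v)) (c v) := by
    intro u v huv
    exact (by decide : ∀ a b a' b' : Bool, a ≠ b → a' ≠ b' → xor a' a = xor b' b)
      _ _ _ _ (hc u v huv) (hc _ _ ((hσ u v).2 huv))
  refine or_iff_not_imp_left.2 fun hkeep => ?_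
  obtain ⟨w, hw⟩ := not_forall.1 hkeep
  exact fun v => (by decide : ∀ a b a' b' : Bool, a' ≠ a → xor a' a = xor b' b → b' = !b)
    _ _ _ _ hw ((hG w v).eq_of_forall_adj hconst)

end SimpleGraph

namespace Equiv.Perm

variable {V : Type*} {σ : Perm V}

theorem sameCycle_iff_mem_orbit_zpowers {p q : V} :
    σ.SameCycle p q ↔ q ∈ orbit (zpowers σ) p := by
  constructor
  · rintro ⟨k, hk⟩
    exact ⟨⟨σ ^ k, k, rfl⟩, hk⟩
  · rintro ⟨⟨_, k, rfl⟩, hk⟩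
    exact ⟨k, hk⟩

theorem zpow_eq_zpow_of_apply_eq (htrans : ∀ p q, σ.SameCycle p q) {v : V} {a b : ℤ}
    (h : (σ ^ a) v = (σ ^ b) v) : σ ^ a = σ ^ b := by
  ext w
  obtain ⟨k, rfl⟩ := htrans v w
  rw [zpow_apply_comm σ a k, h, zpow_apply_comm]

theorem orderOf_eq_natCard [Nonempty V] (htrans : ∀ p q, σ.SameCycle p q) :
    orderOf σ = Nat.card V := by
  obtain ⟨v⟩ := ‹Nonempty V›
  rw [← Nat.card_zpowers]
  refine Nat.card_eq_of_bijective (fun g : zpowers σ => (g : Perm V) v) ⟨?_, fun w => ?_⟩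
  · rintro ⟨_, a, rfl⟩ ⟨_, b, rfl⟩ h
    exact Subtype.ext (zpow_eq_zpow_of_apply_eq htrans h)
  · obtain ⟨k, hk⟩ := htrans v w
    exact ⟨⟨σ ^ k, k, rfl⟩, hk⟩

theorem natCard_orbit_zpowers_eq_orderOf (htrans : ∀ p q, σ.SameCycle p q) (p : V) :
    Nat.card (orbit (zpowers σ) p) = orderOf σ := by
  have : Nonempty V := ⟨p⟩
  rw [orderOf_eq_natCard htrans, Set.eq_univ_of_forall fun q =>
    sameCycle_iff_mem_orbit_zpowers.1 (htrans p q), Nat.card_univ]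

noncomputable def reflectAt (htrans : ∀ p q, σ.SameCycle p q) (v w : V) : V :=
  (σ ^ (-(htrans v w).choose)) v

theorem reflectAt_zpow_apply (htrans : ∀ p q, σ.SameCycle p q) (v : V) (k : ℤ) :
    reflectAt htrans v ((σ ^ k) v) = (σ ^ (-k)) v := by
  rw [reflectAt, zpow_neg, zpow_eq_zpow_of_apply_eq htrans (htrans v _).choose_spec, zpow_neg]

theorem reflectAt_involutive (htrans : ∀ p q, σ.SameCycle p q) (v : V) :
    Involutive (reflectAt htrans v) := by
  intro w
  obtain ⟨k, rfl⟩ := htrans v w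
  rw [reflectAt_zpow_apply, reflectAt_zpow_apply, neg_neg]

theorem exists_adj_zpow_apply_of_odd_card {G : SimpleGraph V}
    (hσ : ∀ p q, G.Adj (σ p) (σ q) ↔ G.Adj p q) (htrans : ∀ p q, σ.SameCycle p q) (v : V)
    {s : Finset V} (hs : ∀ w, w ∈ s ↔ G.Adj v w) (hodd : Odd s.card) :
    ∃ n : ℤ, G.Adj v ((σ ^ n) v) ∧ σ ^ (2 * n) = 1 := by
  set ρ := (reflectAt_involutive htrans v).toPerm
  have hρ : ∀ w, ρ w ∈ s ↔ w ∈ s := by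
    intro w
    obtain ⟨k, rfl⟩ := htrans v w
    rw [hs, hs, Involutive.coe_toPerm, reflectAt_zpow_apply,
      ← G.adj_zpow_apply_iff hσ (-k) v ((σ ^ k) v), zpow_neg, inv_def, symm_apply_apply, G.adj_comm]
  set τ : Perm s := ρ.subtypePerm hρ
  have hτ : τ ^ 2 ^ 1 = 1 := by
    rw [pow_one, sq]
    ext ⟨w, hw⟩
    simp only [τ, ρ, mul_apply, subtypePerm_apply, Involutive.coe_toPerm, one_apply,
      reflectAt_involutive htrans v w]
  have hcard : ¬2 ∣ Fintype.card s := by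
    rwa [Fintype.card_coe, ← even_iff_two_dvd, Nat.not_even_iff_odd]
  obtain ⟨⟨w, hw⟩, hfix⟩ := exists_fixed_point_of_prime hcard hτ
  obtain ⟨k, rfl⟩ := htrans v w
  have hk : σ ^ (-k) = σ ^ k := by
    apply zpow_eq_zpow_of_apply_eq htrans
    simpa only [τ, ρ, subtypePerm_apply, Involutive.coe_toPerm, reflectAt_zpow_apply,
      Subtype.mk.injEq] using hfix
  refine ⟨k, (hs _).1 hw, ?_⟩
  rw [show 2 * k = k - -k by ring, zpow_sub, hk, mul_inv_cancel]

theorem odd_of_apply_zpow_apply_ne {c : V → Bool}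
    (hflip : ∀ v, c (σ v) = !c v) {n : ℤ} {v : V} (h : c ((σ ^ n) v) ≠ c v) : Odd n := by
  by_contra hn
  obtain ⟨k, rfl⟩ := Int.not_odd_iff_even.1 hn
  apply h
  rw [← two_mul, zpow_mul]
  exact apply_zpow_smul_eq (g := σ ^ (2 : ℤ)) (f := c)
    (fun w => by rw [Perm.smul_def, zpow_two, mul_apply, hflip, hflip, Bool.not_not]) k v

end Equiv.Perm

theorem eq_two_mul_or_eq_neg_of_sub_eq_sub {R : Type*} [CommRing R] {x y : R}
    (h2 : IsUnit (2 : R)) (hx : x ≠ 0) (hy : y ≠ 0) (hxy : x ≠ y) {u₁ u₂ v₁ v₂ : R}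
    (hu₁ : u₁ ∈ ({0, x, y} : Set R)) (hu₂ : u₂ ∈ ({0, x, y} : Set R))
    (hv₁ : v₁ ∈ ({0, x, y} : Set R)) (hv₂ : v₂ ∈ ({0, x, y} : Set R))
    (h : u₁ - v₁ = u₂ - v₂) (hu : u₁ ≠ u₂) (huv : u₁ ≠ v₁) :
    y = 2 * x ∨ x = 2 * y ∨ y = -x := by
  have h2x : 2 * x ≠ 0 := fun h => hx (h2.mul_right_eq_zero.1 h)
  have h2y : 2 * y ≠ 0 := fun h => hy (h2.mul_right_eq_zero.1 h)
  have h2xy : 2 * x ≠ 2 * y := fun h => hxy (h2.mul_left_cancel h)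
  simp only [Set.mem_insert_iff, Set.mem_singleton_iff] at hu₁ hu₂ hv₁ hv₂
  grind

theorem isUnit_of_closure_pair_eq_top {R : Type*} [CommRing R] {a b : R}
    (hb : b ∈ AddSubgroup.zmultiples a) (h : AddSubgroup.closure ({a, b} : Set R) = ⊤) :
    IsUnit a := by
  have h1 : (1 : R) ∈ AddSubgroup.zmultiples a :=
    (AddSubgroup.closure_le _).2 (Set.insert_subset (AddSubgroup.mem_zmultiples a)
      (Set.singleton_subset_iff.2 hb)) (h ▸ AddSubgroup.mem_top 1)
  obtain ⟨k, hk⟩ := AddSubgroup.mem_zmultiples_iff.1 h1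
  exact IsUnit.of_mul_eq_one (k : R) (by rw [mul_comm, ← zsmul_eq_mul, hk])

theorem exists_isUnit_pair_eq {R : Type*} [CommRing R] {x y : R}
    (hconn : AddSubgroup.closure ({x, y} : Set R) = ⊤) (h : y = 2 * x ∨ x = 2 * y ∨ y = -x) :
    ∃ a : R, IsUnit a ∧ (({x, y} : Set R) = {a, 2 * a} ∨ ({x, y} : Set R) = {a, -a}) := by
  rcases h with rfl | rfl | rfl
  · refine ⟨x, isUnit_of_closure_pair_eq_top ?_ hconn, Or.inl rfl⟩
    exact AddSubgroup.mem_zmultiples_iff.2 ⟨2, by rw [two_zsmul, two_mul]⟩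
  · rw [Set.pair_comm] at hconn ⊢
    refine ⟨y, isUnit_of_closure_pair_eq_top ?_ hconn, Or.inl rfl⟩
    exact AddSubgroup.mem_zmultiples_iff.2 ⟨2, by rw [two_zsmul, two_mul]⟩
  · refine ⟨x, isUnit_of_closure_pair_eq_top ?_ hconn, Or.inr rfl⟩
    exact AddSubgroup.mem_zmultiples_iff.2 ⟨-1, neg_one_zsmul x⟩

theorem ZMod.isUnit_two_of_odd {m : ℕ} (hm : Odd m) : IsUnit (2 : ZMod m) := by
  simpa using (ZMod.isUnit_iff_coprime 2 m).2 (Nat.coprime_two_left.2 hm)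

section Haar

variable {m : ℕ} {x y : ZMod m}

theorem haar_adj_false_true_iff {i j : ZMod m} :
    (Haar m x y).Adj (i, false) (j, true) ↔ j - i ∈ ({0, x, y} : Set (ZMod m)) := by
  simp [Haar, SimpleGraph.fromRel_adj, sub_eq_iff_eq_add']

theorem haar_adj_snd_ne {p q : ZMod m × Bool} (h : (Haar m x y).Adj p q) : p.2 ≠ q.2 := by
  obtain ⟨-, ⟨hp, hq, -⟩ | ⟨hq, hp, -⟩⟩ := h <;> simp [hp, hq]

theorem haar_adj_zero_iff {p : ZMod m × Bool} :
    (Haar m x y).Adj (0, false) p ↔ p.2 = true ∧ p.1 ∈ ({0, x, y} : Set (ZMod m)) := by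
  obtain ⟨u, _ | _⟩ := p
  · simp only [Bool.false_eq_true, false_and, iff_false]
    exact fun h => haar_adj_snd_ne h rfl
  · simpa using haar_adj_false_true_iff (i := 0) (j := u)

theorem haar_preconnected (hconn : AddSubgroup.closure ({x, y} : Set (ZMod m)) = ⊤) :
    (Haar m x y).Preconnected := by
  have hadj : ∀ i s, s ∈ ({0, x, y} : Set (ZMod m)) → (Haar m x y).Adj (i, false) (i + s, true) :=
    fun i s hs => haar_adj_false_true_iff.2 (by simpa using hs)
  have hshift : ∀ z i, (Haar m x y).Reachable (i, false) (i + z, false) := by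
    intro z
    induction (hconn ▸ AddSubgroup.mem_top z : z ∈ AddSubgroup.closure {x, y})
      using AddSubgroup.closure_induction with
    | mem z hz =>
      intro i
      refine (hadj i z (Or.inr hz)).reachable.trans ?_
      simpa using (hadj (i + z) 0 (by simp)).reachable.symm
    | zero => intro i; rw [add_zero]
    | add z w _ _ ihz ihw => intro i; simpa only [add_assoc] using (ihz i).trans (ihw (i + z))
    | neg z _ ih => intro i; simpa using (ih (i + -z)).symm
  have hfalse : ∀ j, (Haar m x y).Reachable ((0 : ZMod m), false) (j, false) := fun j => by
    simpa using hshift j 0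
  have hfrom0 : ∀ p, (Haar m x y).Reachable ((0 : ZMod m), false) p := by
    rintro ⟨j, _ | _⟩
    · exact hfalse j
    · exact (hfalse j).trans (by simpa using (hadj j 0 (by simp)).reachable)
  exact fun u v => (hfrom0 u).symm.trans (hfrom0 v)

end Haar

section HaarCirculant

variable {m : ℕ} {x y : ZMod m} {σ : Perm (ZMod m × Bool)}

theorem haar_snd_apply_eq_not (hconn : AddSubgroup.closure ({x, y} : Set (ZMod m)) = ⊤)
    (hσ : ∀ p q, (Haar m x y).Adj (σ p) (σ q) ↔ (Haar m x y).Adj p q)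
    (htrans : ∀ p q, σ.SameCycle p q) (p : ZMod m × Bool) : (σ p).2 = !p.2 := by
  refine ((haar_preconnected hconn).forall_eq_or_forall_eq_not (c := Prod.snd)
    (fun _ _ => haar_adj_snd_ne) hσ).resolve_left (fun hkeep => ?_) p
  obtain ⟨n, hn⟩ := htrans ((0 : ZMod m), false) (0, true)
  have := apply_zpow_smul_eq (g := σ) (f := Prod.snd) hkeep n ((0 : ZMod m), false)
  rw [Perm.smul_def, hn] at this
  exact Bool.noConfusion this

theorem haar_exists_adj_zpow_apply (hx : x ≠ 0) (hy : y ≠ 0) (hxy : x ≠ y)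
    (hσ : ∀ p q, (Haar m x y).Adj (σ p) (σ q) ↔ (Haar m x y).Adj p q)
    (htrans : ∀ p q, σ.SameCycle p q) :
    ∃ n : ℤ, (Haar m x y).Adj (0, false) ((σ ^ n) (0, false)) ∧ σ ^ (2 * n) = 1 := by
  refine σ.exists_adj_zpow_apply_of_odd_card hσ htrans _
    (s := {((0 : ZMod m), true), (x, true), (y, true)}) (fun p => ?_) ?_
  · rw [haar_adj_zero_iff]
    obtain ⟨u, _ | _⟩ := p <;> simp
  · rw [Finset.card_insert_of_notMem (by simp [hx.symm, hy.symm]), Finset.card_pair (by simp [hxy])]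
    decide

theorem haar_odd_of_adj_zpow_apply (hconn : AddSubgroup.closure ({x, y} : Set (ZMod m)) = ⊤)
    (hσ : ∀ p q, (Haar m x y).Adj (σ p) (σ q) ↔ (Haar m x y).Adj p q)
    (htrans : ∀ p q, σ.SameCycle p q) {n : ℤ}
    (hadj : (Haar m x y).Adj (0, false) ((σ ^ n) (0, false))) (hn : σ ^ (2 * n) = 1) :
    Odd m := by
  have hn_odd : Odd n := Perm.odd_of_apply_zpow_apply_ne (c := Prod.snd)
    (haar_snd_apply_eq_not hconn hσ htrans) (haar_adj_snd_ne hadj).symm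
  have hord : orderOf σ = 2 * m := by
    rw [Perm.orderOf_eq_natCard htrans, Nat.card_prod, Nat.card_zmod, Nat.card_eq_fintype_card,
      Fintype.card_bool, mul_comm]
  have hdvd : ((2 * m : ℕ) : ℤ) ∣ 2 * n := hord ▸ orderOf_dvd_iff_zpow_eq_one.2 hn
  push_cast at hdvd
  obtain ⟨k, rfl⟩ := (mul_dvd_mul_iff_left two_ne_zero).1 hdvd
  exact Int.odd_coe_nat m |>.1 (Int.odd_mul.1 hn_odd).1

theorem haar_eq_two_mul_or_eq_neg (h2 : IsUnit (2 : ZMod m)) (hx : x ≠ 0) (hy : y ≠ 0)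
    (hxy : x ≠ y) (hσ : ∀ p q, (Haar m x y).Adj (σ p) (σ q) ↔ (Haar m x y).Adj p q)
    (htrans : ∀ p q, σ.SameCycle p q) {n : ℤ}
    (hadj : (Haar m x y).Adj (0, false) ((σ ^ n) (0, false))) (hn : σ ^ (2 * n) = 1) :
    y = 2 * x ∨ x = 2 * y ∨ y = -x := by
  set v₀ : ZMod m × Bool := (0, false)
  obtain ⟨u₁, h₁, hu₁⟩ : ∃ u₁, (σ ^ n) v₀ = (u₁, true) ∧ u₁ ∈ ({0, x, y} : Set (ZMod m)) :=
    ⟨_, Prod.ext rfl (haar_adj_zero_iff.1 hadj).1, (haar_adj_zero_iff.1 hadj).2⟩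
  obtain ⟨u₂, hu₂, hne⟩ : ∃ u₂ ∈ ({0, x, y} : Set (ZMod m)), u₂ ≠ u₁ := by
    by_cases h : u₁ = 0
    · exact ⟨x, by simp, h ▸ hx⟩
    · exact ⟨0, by simp, Ne.symm h⟩
  obtain ⟨k, hk⟩ := htrans v₀ (u₂, true)
  -- `P` closes the 4-cycle `v₀, σ ^ n v₀, P, σ ^ k v₀`, since powers of `σ` commute
  set P := (σ ^ n) ((σ ^ k) v₀)
  have hP₁ : (Haar m x y).Adj (u₁, true) P :=
    h₁ ▸ (SimpleGraph.adj_zpow_apply_iff hσ n _ _).2 (hk ▸ haar_adj_zero_iff.2 ⟨rfl, hu₂⟩)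
  have hP₂ : (Haar m x y).Adj (u₂, true) P := by
    rw [← hk, show P = (σ ^ k) ((σ ^ n) v₀) from Perm.zpow_apply_comm σ n k]
    exact (SimpleGraph.adj_zpow_apply_iff hσ k _ _).2 hadj
  have hPv : P ≠ v₀ := by
    intro hP
    have hinv : (σ ^ n) ((σ ^ n) v₀) = v₀ := by
      rw [← Perm.mul_apply, ← zpow_add, ← two_mul, hn, Perm.one_apply]
    have := (σ ^ n).injective (hP.trans hinv.symm)
    exact hne (congrArg Prod.fst (hk.symm.trans (this.trans h₁)))
  obtain ⟨A, hA⟩ : ∃ A, P = (A, false) :=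
    ⟨P.1, Prod.ext rfl (by simpa using (haar_adj_snd_ne hP₂).symm)⟩
  rw [hA, SimpleGraph.adj_comm, haar_adj_false_true_iff] at hP₁ hP₂
  refine eq_two_mul_or_eq_neg_of_sub_eq_sub h2 hx hy hxy hu₁ hu₂ hP₁ hP₂ (by ring) hne.symm
    fun h => hPv ?_
  rw [hA, sub_eq_self.1 h.symm]

end HaarCirculant

section HaarRotation

variable {m : ℕ} {x y : ZMod m}

def haarRotation (t : ZMod m) : Perm (ZMod m × Bool) where
  toFun p := (p.1 + 1 + bif p.2 then -t else t, !p.2)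
  invFun p := (p.1 - 1 - bif p.2 then t else -t, !p.2)
  left_inv := by rintro ⟨i, _ | _⟩ <;> simp <;> ring
  right_inv := by rintro ⟨i, _ | _⟩ <;> simp <;> ring

theorem haarRotation_apply_apply (t : ZMod m) (p : ZMod m × Bool) :
    haarRotation t (haarRotation t p) = (p.1 + 2, p.2) := by
  obtain ⟨i, _ | _⟩ := p <;> simp [haarRotation] <;> ring

theorem haarRotation_pow_two_mul_apply (t : ZMod m) (k : ℕ) (p : ZMod m × Bool) :
    (haarRotation t ^ (2 * k)) p = (p.1 + 2 * k, p.2) := by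
  induction k with
  | zero => simp
  | succ k ih =>
    rw [mul_add_one, add_comm, pow_add, Perm.mul_apply, ih, sq, Perm.mul_apply,
      haarRotation_apply_apply]
    push_cast
    ring_nf

theorem haarRotation_adj_iff {t : ZMod m}
    (ht : ∀ d ∈ ({0, x, y} : Set (ZMod m)), 2 * t - d ∈ ({0, x, y} : Set (ZMod m)))
    (p q : ZMod m × Bool) :
    (Haar m x y).Adj (haarRotation t p) (haarRotation t q) ↔ (Haar m x y).Adj p q := by
  have key : ∀ i j, (Haar m x y).Adj (haarRotation t (i, false)) (haarRotation t (j, true)) ↔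
      (Haar m x y).Adj (i, false) (j, true) := by
    intro i j
    rw [SimpleGraph.adj_comm]
    simp only [haarRotation, coe_fn_mk, cond_false, cond_true, Bool.not_false, Bool.not_true,
      haar_adj_false_true_iff]
    rw [show i + 1 + t - (j + 1 + -t) = 2 * t - (j - i) by ring]
    exact ⟨fun h => by simpa using ht _ h, ht _⟩
  rcases p with ⟨i, _ | _⟩ <;> rcases q with ⟨j, _ | _⟩
  · exact iff_of_false (fun h => haar_adj_snd_ne h rfl) (fun h => haar_adj_snd_ne h rfl)
  · exact key i j
  · rw [SimpleGraph.adj_comm, (Haar m x y).adj_comm (i, true)]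
    exact key j i
  · exact iff_of_false (fun h => haar_adj_snd_ne h rfl) (fun h => haar_adj_snd_ne h rfl)

theorem haarRotation_sameCycle [NeZero m] (h2 : IsUnit (2 : ZMod m)) (t : ZMod m)
    (p q : ZMod m × Bool) : (haarRotation t).SameCycle p q := by
  have hside : ∀ i j b, (haarRotation t).SameCycle (i, b) (j, b) := by
    intro i j b
    obtain ⟨k, hk⟩ := ZMod.natCast_zmod_surjective (((h2.unit⁻¹ : (ZMod m)ˣ) : ZMod m) * (j - i))
    refine ⟨(2 * k : ℕ), ?_⟩
    rw [zpow_natCast, haarRotation_pow_two_mul_apply, hk, ← mul_assoc, h2.mul_val_inv, one_mul,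
      add_sub_cancel]
  obtain ⟨i, b⟩ := p
  obtain ⟨j, c⟩ := q
  obtain rfl | rfl : c = b ∨ c = !b := by cases b <;> cases c <;> simp
  · exact hside i j c
  · exact (Perm.sameCycle_apply_right.2 (Perm.SameCycle.refl _ _)).trans (hside _ j _)

end HaarRotation

theorem stmt_9_general (m : ℕ) (x y : ZMod m)
    (hx : x ≠ 0) (hy : y ≠ 0) (hxy : x ≠ y)
    (hconn : AddSubgroup.closure ({x, y} : Set (ZMod m)) = ⊤) :
    (∃ σ : Equiv.Perm (ZMod m × Bool),
        (∀ p q : ZMod m × Bool, (Haar m x y).Adj (σ p) (σ q) ↔ (Haar m x y).Adj p q) ∧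
        (∀ p q : ZMod m × Bool, q ∈ MulAction.orbit (Subgroup.zpowers σ) p) ∧
        (∀ p : ZMod m × Bool,
          Nat.card (MulAction.orbit (Subgroup.zpowers σ) p) = orderOf σ)) ↔
      (Odd m ∧ ∃ a : ZMod m, IsUnit a ∧
        (({x, y} : Set (ZMod m)) = {a, 2 * a} ∨ ({x, y} : Set (ZMod m)) = {a, -a})) := by
  simp only [← Perm.sameCycle_iff_mem_orbit_zpowers]
  constructor
  · rintro ⟨σ, hσ, htrans, -⟩
    obtain ⟨n, hadj, hn⟩ := haar_exists_adj_zpow_apply hx hy hxy hσ htrans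
    have hodd := haar_odd_of_adj_zpow_apply hconn hσ htrans hadj hn
    exact ⟨hodd, exists_isUnit_pair_eq hconn <| haar_eq_two_mul_or_eq_neg
      (ZMod.isUnit_two_of_odd hodd) hx hy hxy hσ htrans hadj hn⟩
  · rintro ⟨hodd, a, -, hxya⟩
    have : NeZero m := ⟨hodd.pos.ne'⟩
    obtain ⟨t, ht⟩ : ∃ t : ZMod m,
        ∀ d ∈ ({0, x, y} : Set (ZMod m)), 2 * t - d ∈ ({0, x, y} : Set (ZMod m)) := by
      rcases hxya with h | h
      · refine ⟨a, ?_⟩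
        rw [h]
        rintro d (rfl | rfl | rfl) <;> simp [two_mul]
      · refine ⟨0, ?_⟩
        rw [h]
        rintro d (rfl | rfl | rfl) <;> simp
    have htrans := haarRotation_sameCycle (ZMod.isUnit_two_of_odd hodd) t
    exact ⟨haarRotation t, haarRotation_adj_iff ht, htrans,
      Perm.natCard_orbit_zpowers_eq_orderOf htrans⟩

/-- A connected cubic cyclic Haar graph H(m,x,y) with m ≥ 5
(x, y distinct nonzero, {x,y} generating, i.e. gcd(m,x,y)=1) is a circulant
(admits an automorphism acting regularly on the vertices) if and only if
m is odd and {x,y} = {a,2a} or {x,y} = {a,−a} for some unit a of ℤ_m. -/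
theorem stmt_9 (m : ℕ) (hm : 5 ≤ m) (x y : ZMod m)
    (hx : x ≠ 0) (hy : y ≠ 0) (hxy : x ≠ y)
    (hconn : AddSubgroup.closure ({x, y} : Set (ZMod m)) = ⊤) :
    (∃ σ : Equiv.Perm (ZMod m × Bool),
        (∀ p q : ZMod m × Bool, (Haar m x y).Adj (σ p) (σ q) ↔ (Haar m x y).Adj p q) ∧
        (∀ p q : ZMod m × Bool, q ∈ MulAction.orbit (Subgroup.zpowers σ) p) ∧
        (∀ p : ZMod m × Bool,
          Nat.card (MulAction.orbit (Subgroup.zpowers σ) p) = orderOf σ)) ↔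
      (Odd m ∧ ∃ a : ZMod m, IsUnit a ∧
        (({x, y} : Set (ZMod m)) = {a, 2 * a} ∨ ({x, y} : Set (ZMod m)) = {a, -a})) :=
  stmt_9_general m x y hx hy hxy hconn
end

section
/- Let (Δ, λ) be a labelled graph with λ: D(Δ) → ℕ. Then there exists an index function ι: V(Δ) → ℕ with λ(x)·ι(beg x) = λ(x⁻¹)·ι(end x) for all darts x if and only if λ*(C) = 1 for every closed walk C in Δ, where λ*(x_1,…,x_k) = ∏ λ(x_i)/λ(x_i⁻¹) ∈ ℚ. -/
/-- A (multi)graph given by vertices, darts, a beginning map and a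
dart-reversing involution. -/
structure MultiGraph where
  V : Type
  D : Type
  beg : D → V
  inv : D → D
  inv_invol : ∀ x, inv (inv x) = x

/-- The end of a dart. -/
def MultiGraph.endd (Δ : MultiGraph) (x : Δ.D) : Δ.V := Δ.beg (Δ.inv x)

/-- `IsWalkFrom Δ l u v`: the list of darts `l` is a walk from `u` to `v`. -/
def MultiGraph.IsWalkFrom (Δ : MultiGraph) : List Δ.D → Δ.V → Δ.V → Prop
  | [], u, v => u = v
  | x :: l, u, v => Δ.beg x = u ∧ MultiGraph.IsWalkFrom Δ l (Δ.endd x) v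

/-- λ*(W) = ∏ λ(x_i)/λ(x_i⁻¹) ∈ ℚ. -/
def lamStar (Δ : MultiGraph) (lam : Δ.D → ℕ) (l : List Δ.D) : ℚ :=
  (l.map fun x => (lam x : ℚ) / (lam (Δ.inv x) : ℚ)).prod

/-!
An index function pins down the ratio `ι(end)/ι(beg)` along every dart as `λ(x)/λ(x⁻¹)`, so along
any walk `λ*` measures the ratio of `ι` at its ends; on a closed walk this ratio is `1`.
Conversely, if `λ*` is trivial on closed walks then `λ*` of a walk from a base point depends only
on its endpoint (compose with the reverse of another walk), which gives a positive rational index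
function; multiplying by a common denominator makes it integral.
-/

namespace MultiGraph

variable (Δ : MultiGraph)

lemma endd_inv (x : Δ.D) : Δ.endd (Δ.inv x) = Δ.beg x := by
  simp [endd, Δ.inv_invol]

lemma isWalkFrom_singleton (x : Δ.D) : Δ.IsWalkFrom [x] (Δ.beg x) (Δ.endd x) :=
  ⟨rfl, rfl⟩

variable {Δ}

lemma IsWalkFrom.append {l l' : List Δ.D} {u v w : Δ.V}
    (h : Δ.IsWalkFrom l u v) (h' : Δ.IsWalkFrom l' v w) : Δ.IsWalkFrom (l ++ l') u w := by
  induction l generalizing u with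
  | nil => cases h; exact h'
  | cons x l ih => exact ⟨h.1, ih h.2⟩

lemma IsWalkFrom.reverse {l : List Δ.D} {u v : Δ.V}
    (h : Δ.IsWalkFrom l u v) : Δ.IsWalkFrom (l.reverse.map Δ.inv) v u := by
  induction l generalizing u with
  | nil => exact h.symm
  | cons x l ih =>
    obtain ⟨rfl, hl⟩ := h
    simpa [← Δ.endd_inv x] using (ih hl).append (Δ.isWalkFrom_singleton (Δ.inv x))

end MultiGraph

section LamStar

variable (Δ : MultiGraph) (lam : Δ.D → ℕ)

@[simp]
lemma lamStar_nil : lamStar Δ lam [] = 1 := rfl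

@[simp]
lemma lamStar_cons (x : Δ.D) (l : List Δ.D) :
    lamStar Δ lam (x :: l) = (lam x : ℚ) / (lam (Δ.inv x) : ℚ) * lamStar Δ lam l := by
  simp [lamStar]

@[simp]
lemma lamStar_append (l l' : List Δ.D) :
    lamStar Δ lam (l ++ l') = lamStar Δ lam l * lamStar Δ lam l' := by
  simp [lamStar]

lemma lamStar_reverse_map_inv (l : List Δ.D) :
    lamStar Δ lam (l.reverse.map Δ.inv) = (lamStar Δ lam l)⁻¹ := by
  induction l with
  | nil => simp
  | cons x l ih =>
    rw [List.reverse_cons, List.map_append, lamStar_append, ih]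
    simp [Δ.inv_invol, mul_comm]

lemma lamStar_pos (hlam : ∀ x, 0 < lam x) (l : List Δ.D) : 0 < lamStar Δ lam l := by
  induction l with
  | nil => simp
  | cons x l ih =>
    exact lamStar_cons Δ lam x l ▸ mul_pos (div_pos (mod_cast hlam x) (mod_cast hlam _)) ih

variable {Δ lam}

lemma lamStar_mul_eq_of_isWalkFrom (hlam : ∀ x, 0 < lam x) {ι : Δ.V → ℚ}
    (hι : ∀ x, lam x * ι (Δ.beg x) = lam (Δ.inv x) * ι (Δ.endd x))
    {l : List Δ.D} {u v : Δ.V} (h : Δ.IsWalkFrom l u v) : lamStar Δ lam l * ι u = ι v := by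
  induction l generalizing u with
  | nil => cases h; simp
  | cons x l ih =>
    obtain ⟨rfl, hl⟩ := h
    have hx : (lam (Δ.inv x) : ℚ) ≠ 0 := by exact_mod_cast (hlam (Δ.inv x)).ne'
    rw [← ih hl, lamStar_cons]
    field_simp
    linear_combination lamStar Δ lam l * hι x

lemma lamStar_eq_one_of_isWalkFrom_self (hlam : ∀ x, 0 < lam x) {ι : Δ.V → ℚ}
    (hι₀ : ∀ v, ι v ≠ 0) (hι : ∀ x, lam x * ι (Δ.beg x) = lam (Δ.inv x) * ι (Δ.endd x))
    {l : List Δ.D} {u : Δ.V} (h : Δ.IsWalkFrom l u u) : lamStar Δ lam l = 1 :=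
  mul_eq_right₀ (hι₀ u) |>.mp (lamStar_mul_eq_of_isWalkFrom hlam hι h)

lemma lamStar_eq_of_isWalkFrom (hlam : ∀ x, 0 < lam x)
    (hclosed : ∀ (u : Δ.V) (l : List Δ.D), Δ.IsWalkFrom l u u → lamStar Δ lam l = 1)
    {l l' : List Δ.D} {u v : Δ.V} (h : Δ.IsWalkFrom l u v) (h' : Δ.IsWalkFrom l' u v) :
    lamStar Δ lam l = lamStar Δ lam l' := by
  have hcycle := hclosed u _ (h.append h'.reverse)
  rwa [lamStar_append, lamStar_reverse_map_inv,
    mul_inv_eq_one₀ (lamStar_pos Δ lam hlam l').ne'] at hcycle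

/-- The witness is the potential `v ↦ λ*(w v)`, for any choice of walks `w v` from `u₀` to `v`. -/
lemma exists_rat_index_of_lamStar_eq_one (hlam : ∀ x, 0 < lam x) (u₀ : Δ.V)
    (hconn : ∀ u v : Δ.V, ∃ l : List Δ.D, Δ.IsWalkFrom l u v)
    (hclosed : ∀ (u : Δ.V) (l : List Δ.D), Δ.IsWalkFrom l u u → lamStar Δ lam l = 1) :
    ∃ ι : Δ.V → ℚ, (∀ v, 0 < ι v) ∧
      ∀ x, lam x * ι (Δ.beg x) = lam (Δ.inv x) * ι (Δ.endd x) := by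
  choose w hw using hconn u₀
  refine ⟨fun v => lamStar Δ lam (w v), fun v => lamStar_pos Δ lam hlam _, fun x => ?_⟩
  have hx : (lam (Δ.inv x) : ℚ) ≠ 0 := by exact_mod_cast (hlam (Δ.inv x)).ne'
  have hstep := lamStar_eq_of_isWalkFrom hlam hclosed (hw (Δ.endd x))
    ((hw (Δ.beg x)).append (Δ.isWalkFrom_singleton x))
  simp only [lamStar_append, lamStar_cons, lamStar_nil] at hstep
  dsimp only
  rw [hstep]
  field_simp

end LamStar

lemma exists_nat_mul_eq_natCast {V : Type*} [Finite V] (f : V → ℚ) (hf : ∀ v, 0 ≤ f v) :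
    ∃ N : ℕ, 0 < N ∧ ∃ g : V → ℕ, ∀ v, (g v : ℚ) = N * f v := by
  have := Fintype.ofFinite V
  refine ⟨∏ v, (f v).den, Finset.prod_pos fun v _ => (f v).pos, ?_⟩
  have hdvd (v : V) : (f v).den ∣ ∏ v, (f v).den := Finset.dvd_prod_of_mem _ (Finset.mem_univ v)
  choose m hm using hdvd
  refine ⟨fun v => m v * (f v).num.natAbs, fun v => ?_⟩
  rw [hm v, Nat.cast_mul, Nat.cast_mul, Nat.cast_natAbs,
    abs_of_nonneg (Rat.num_nonneg.mpr (hf v)), ← Rat.mul_den_eq_num]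
  ring

theorem stmt_15_general (Δ : MultiGraph) [Finite Δ.V] [Nonempty Δ.V]
    (lam : Δ.D → ℕ) (hlam : ∀ x, 0 < lam x)
    (hconn : ∀ u v : Δ.V, ∃ l : List Δ.D, Δ.IsWalkFrom l u v) :
    (∃ ι : Δ.V → ℕ, (∀ v, 0 < ι v) ∧
        ∀ x : Δ.D, lam x * ι (Δ.beg x) = lam (Δ.inv x) * ι (Δ.endd x)) ↔
      (∀ (u : Δ.V) (l : List Δ.D), Δ.IsWalkFrom l u u → lamStar Δ lam l = 1) := by
  constructor
  · rintro ⟨ι, hιpos, hι⟩ u l hw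
    exact lamStar_eq_one_of_isWalkFrom_self hlam (ι := fun v => ι v)
      (fun v => by exact_mod_cast (hιpos v).ne') (fun x => by exact_mod_cast hι x) hw
  · intro hclosed
    obtain ⟨f, hfpos, hf⟩ :=
      exists_rat_index_of_lamStar_eq_one hlam (Classical.arbitrary Δ.V) hconn hclosed
    obtain ⟨N, hN, g, hg⟩ := exists_nat_mul_eq_natCast f fun v => (hfpos v).le
    have hNq : (0 : ℚ) < N := by exact_mod_cast hN
    refine ⟨g, fun v => ?_, fun x => ?_⟩
    · have : (0 : ℚ) < g v := hg v ▸ mul_pos hNq (hfpos v)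
      exact_mod_cast this
    · have : (lam x : ℚ) * g (Δ.beg x) = lam (Δ.inv x) * g (Δ.endd x) := by
        rw [hg, hg]
        linear_combination (N : ℚ) * hf x
      exact_mod_cast this

/-- A labelled finite connected graph (Δ,λ) is extendable
(admits an index function ι with λ(x)·ι(beg x) = λ(x⁻¹)·ι(end x) for all darts)
if and only if λ*(C) = 1 for every closed walk C of Δ. -/
theorem stmt_15 (Δ : MultiGraph) [Finite Δ.V] [Finite Δ.D] [Nonempty Δ.V]
    (lam : Δ.D → ℕ) (hlam : ∀ x, 0 < lam x)
    (hconn : ∀ u v : Δ.V, ∃ l : List Δ.D, Δ.IsWalkFrom l u v) :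
    (∃ ι : Δ.V → ℕ, (∀ v, 0 < ι v) ∧
        ∀ x : Δ.D, lam x * ι (Δ.beg x) = lam (Δ.inv x) * ι (Δ.endd x)) ↔
      (∀ (u : Δ.V) (l : List Δ.D), Δ.IsWalkFrom l u u → lamStar Δ lam l = 1) :=
  stmt_15_general Δ lam hlam hconn
end
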